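/- arXiv:1311.4078 — 7 statements merged into one kernel-verified Lean document; each statement's English description precedes it below -/
import Mathlib

section
/- Fix K > 0 and let BS(S,v) = S·Φ((ln(S/K) + v/2)/√v) − K·Φ((ln(S/K) − v/2)/√v) for S > 0, v > 0, where Φ is the standard normal cumulative distribution function. Then for every S > 0 and v > 0, the second partial derivative of BS with respect to v exists and equals −(S/(4√(2π)·v^{3/2}))·exp(−(ln(S/K) + v/2)²/(2v)) + (S/(4√(2π)·v^{5/2}))·((ln(S/K))² − v²/4)·exp(−(ln(S/K) + v/2)²/(2v)). -/
/-!
With `d₁ = (log (S/K) + v/2)/√v` and `d₂ = d₁ - √v`, the Black–Scholes identity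
`K φ(d₂) = S φ(d₁)` makes the `v`-derivatives of `d₁` and `d₂` enter the vega only through
`d₁ - d₂ = √v`, so `∂BS/∂v = S φ(d₁) / (2√v)`. Differentiating this closed form once more,
with `∂/∂v (-(log (S/K) + v/2)² / 2v) = (log (S/K)² - v²/4) / 2v²`, gives the formula.
-/

open Real MeasureTheory

/-- The standard normal cumulative distribution function. -/
noncomputable def stdNormalCDF (x : ℝ) : ℝ :=
  (Real.sqrt (2 * Real.pi))⁻¹ * ∫ t in Set.Iic x, Real.exp (-t ^ 2 / 2)

/-- The Black–Scholes call price as a function of spot `S` and total variance `v`,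
with strike `K`. -/
noncomputable def BSprice (K S v : ℝ) : ℝ :=
  S * stdNormalCDF ((Real.log (S / K) + v / 2) / Real.sqrt v)
    - K * stdNormalCDF ((Real.log (S / K) - v / 2) / Real.sqrt v)

lemma integrable_exp_neg_sq_div_two : Integrable fun t : ℝ => exp (-t ^ 2 / 2) := by
  convert integrable_exp_neg_mul_sq (show (0 : ℝ) < 1 / 2 by norm_num) using 3
  ring

lemma hasDerivAt_stdNormalCDF (x : ℝ) :
    HasDerivAt stdNormalCDF ((√(2 * π))⁻¹ * exp (-x ^ 2 / 2)) x := by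
  have hcont : Continuous fun t : ℝ => exp (-t ^ 2 / 2) := by fun_prop
  have hint := integrable_exp_neg_sq_div_two
  have hsplit : stdNormalCDF = fun u => (√(2 * π))⁻¹ *
      ((∫ t in Set.Iic 0, exp (-t ^ 2 / 2)) + ∫ t in (0 : ℝ)..u, exp (-t ^ 2 / 2)) := by
    funext u
    rw [stdNormalCDF, ← intervalIntegral.integral_Iic_sub_Iic hint.integrableOn hint.integrableOn,
      add_sub_cancel]
  rw [hsplit]
  exact ((intervalIntegral.integral_hasDerivAt_right hint.intervalIntegrable
    hcont.aestronglyMeasurable.stronglyMeasurableAtFilter hcont.continuousAt).const_add _).const_mul _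

-- `(L - w/2)² = (L + w/2)² - 2Lw`: this is the identity `K φ(d₂) = S φ(d₁)` of Black–Scholes.
lemma exp_neg_sub_half_sq_div (L : ℝ) {w : ℝ} (hw : w ≠ 0) :
    exp (-(L - w / 2) ^ 2 / (2 * w)) = exp (-(L + w / 2) ^ 2 / (2 * w)) * exp L := by
  rw [← exp_add]
  congr 1
  field_simp
  ring

lemma hasDerivAt_neg_add_half_sq_div (L : ℝ) {w : ℝ} (hw : w ≠ 0) :
    HasDerivAt (fun u => -(L + u / 2) ^ 2 / (2 * u)) ((L ^ 2 - w ^ 2 / 4) / (2 * w ^ 2)) w := by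
  have h := ((((hasDerivAt_id' w).div_const 2).const_add L).fun_pow 2).fun_neg.fun_div
    ((hasDerivAt_id' w).const_mul 2) (mul_ne_zero two_ne_zero hw)
  refine h.congr_deriv ?_
  field_simp
  ring

lemma hasDerivAt_BSprice_variance {K S w : ℝ} (hK : 0 < K) (hS : 0 < S) (hw : 0 < w) :
    HasDerivAt (BSprice K S)
      (S / (2 * √(2 * π)) * exp (-(log (S / K) + w / 2) ^ 2 / (2 * w)) / √w) w := by
  set L := log (S / K)
  have hsqrt : √w ≠ 0 := sqrt_ne_zero'.2 hw
  have hd₁ := (((hasDerivAt_id' w).div_const 2).const_add L).fun_div (hasDerivAt_sqrt hw.ne') hsqrt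
  have hd₂ := (((hasDerivAt_id' w).div_const 2).const_sub L).fun_div (hasDerivAt_sqrt hw.ne') hsqrt
  have h := (((hasDerivAt_stdNormalCDF _).comp w hd₁).const_mul S).sub
    (((hasDerivAt_stdNormalCDF _).comp w hd₂).const_mul K)
  have hgauss (a : ℝ) : exp (-(a / √w) ^ 2 / 2) = exp (-a ^ 2 / (2 * w)) := by
    rw [div_pow, sq_sqrt hw.le]
    ring_nf
  refine h.congr_deriv ?_
  rw [hgauss, hgauss, exp_neg_sub_half_sq_div L hw.ne', exp_log (div_pos hS hK)]
  field_simp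
  rw [sq_sqrt hw.le]
  ring

/-- Second derivative of the Black–Scholes price with respect to the total variance `v`:
`∂²BS/∂v² = −(S/(4√(2π)v^{3/2}))·e^{−d²/2v} + (S/(4√(2π)v^{5/2}))((ln(S/K))² − v²/4)·e^{−d²/2v}`
where `d = ln(S/K) + v/2`. -/
theorem stmt2 (K : ℝ) (hK : 0 < K) (S v : ℝ) (hS : 0 < S) (hv : 0 < v) :
    HasDerivAt (fun w : ℝ => deriv (fun u : ℝ => BSprice K S u) w)
      (-(S / (4 * Real.sqrt (2 * Real.pi) * v ^ ((3 : ℝ) / 2)))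
          * Real.exp (-(Real.log (S / K) + v / 2) ^ 2 / (2 * v))
        + S / (4 * Real.sqrt (2 * Real.pi) * v ^ ((5 : ℝ) / 2))
          * ((Real.log (S / K)) ^ 2 - v ^ 2 / 4)
          * Real.exp (-(Real.log (S / K) + v / 2) ^ 2 / (2 * v))) v := by
  have hvega : (fun w => deriv (fun u => BSprice K S u) w) =ᶠ[nhds v]
      fun w => S / (2 * √(2 * π)) * exp (-(log (S / K) + w / 2) ^ 2 / (2 * w)) / √w := by
    filter_upwards [Ioi_mem_nhds hv] with w hw using (hasDerivAt_BSprice_variance hK hS hw).deriv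
  refine HasDerivAt.congr_of_eventuallyEq ?_ hvega
  have h := (((hasDerivAt_neg_add_half_sq_div (log (S / K)) hv.ne').exp).const_mul
    (S / (2 * √(2 * π)))).fun_div (hasDerivAt_sqrt hv.ne') (sqrt_ne_zero'.2 hv)
  refine h.congr_deriv ?_
  rw [rpow_div_two_eq_sqrt _ hv.le, rpow_div_two_eq_sqrt _ hv.le]
  simp only [rpow_ofNat]
  field_simp
  rw [sq_sqrt hv.le]
  ring
end

section
/- Let S > 0, K > 0, V > 0, and let N be a real Gaussian random variable with mean −V/2 and variance V. Then E[(S·e^N − K)₊] = S·Φ((ln(S/K) + V/2)/√V) − K·Φ((ln(S/K) − V/2)/√V), where x₊ = max(x,0) and Φ is the standard normal cumulative distribution function. -/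
open Real MeasureTheory ProbabilityTheory

open Set NNReal

lemma setIntegral_gaussianPDFReal (m : ℝ) {v : ℝ≥0} (hv : v ≠ 0) (s : Set ℝ) :
    ∫ x in s, gaussianPDFReal m v x = (gaussianReal m v).real s := by
  rw [measureReal_def, gaussianReal_apply_eq_integral _ hv, ENNReal.toReal_ofReal
    (integral_nonneg fun _ ↦ gaussianPDFReal_nonneg _ _ _)]

lemma stdNormalCDF_eq_cdf_gaussianReal (x : ℝ) :
    stdNormalCDF x = cdf (gaussianReal 0 1) x := by
  rw [cdf_eq_real, ← setIntegral_gaussianPDFReal _ one_ne_zero, stdNormalCDF,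
    ← integral_const_mul]
  simp [gaussianPDFReal]

lemma gaussianReal_map_sub_div_sqrt (m : ℝ) {v : ℝ≥0} (hv : v ≠ 0) :
    (gaussianReal m v).map (fun x ↦ (m - x) / √v) = gaussianReal 0 1 := by
  have hσ : (√(v : ℝ)) ^ 2 = v := Real.sq_sqrt v.coe_nonneg
  rw [show (fun x ↦ (m - x) / √v) = (· / √v) ∘ (m - ·) from rfl,
    ← Measure.map_map (by fun_prop) (by fun_prop), gaussianReal_map_const_sub,
    gaussianReal_map_div_const, sub_self, zero_div]
  congr
  ext
  simp [hσ, hv]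

lemma gaussianReal_real_Ioi (m a : ℝ) {v : ℝ≥0} (hv : v ≠ 0) :
    (gaussianReal m v).real (Ioi a) = cdf (gaussianReal 0 1) ((m - a) / √v) := by
  have hσ : 0 < √(v : ℝ) := Real.sqrt_pos.2 (by positivity)
  have hpre : (fun x ↦ (m - x) / √v) ⁻¹' Iio ((m - a) / √v) = Ioi a := by
    ext x
    simp [div_lt_div_iff_of_pos_right hσ]
  have := nullSingletonClass_gaussianReal (μ := 0) one_ne_zero
  rw [cdf_eq_real, ← measureReal_congr Iio_ae_eq_Iic, ← gaussianReal_map_sub_div_sqrt m hv,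
    map_measureReal_apply (by fun_prop) measurableSet_Iio, hpre]

lemma exp_mul_gaussianPDFReal (μ : ℝ) (v : ℝ≥0) (x : ℝ) :
    exp x * gaussianPDFReal μ v x = exp (μ + v / 2) * gaussianPDFReal (μ + v) v x := by
  rcases eq_or_ne v 0 with rfl | hv
  · simp
  have hv' : (v : ℝ) ≠ 0 := by exact_mod_cast hv
  simp only [gaussianPDFReal]
  rw [mul_left_comm, ← exp_add, mul_left_comm, ← exp_add]
  congr 2
  field_simp
  ring

lemma max_mul_exp_sub_zero_eq_indicator {S K : ℝ} (hS : 0 < S) (hK : 0 < K) (x : ℝ) :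
    max (S * exp x - K) 0 = (Ioi (log (K / S))).indicator (fun x ↦ S * exp x - K) x := by
  by_cases hx : log (K / S) < x
  · rw [indicator_of_mem (mem_Ioi.2 hx), max_eq_left]
    rw [log_lt_iff_lt_exp (by positivity), div_lt_iff₀ hS] at hx
    linarith
  · rw [indicator_of_notMem (notMem_Ioi.2 (not_lt.1 hx)), max_eq_right]
    rw [not_lt, le_log_iff_exp_le (by positivity), le_div_iff₀ hS] at hx
    linarith

lemma setIntegral_Ioi_gaussianPDFReal (m a : ℝ) {v : ℝ≥0} (hv : v ≠ 0) :
    ∫ x in Ioi a, gaussianPDFReal m v x = stdNormalCDF ((m - a) / √v) := by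
  rw [setIntegral_gaussianPDFReal _ hv, gaussianReal_real_Ioi _ _ hv,
    stdNormalCDF_eq_cdf_gaussianReal]

/-- For `N` Gaussian with mean `−V/2` and variance `V`, the expectation of the call payoff
`(S·e^N − K)₊` is the Black–Scholes formula. -/
theorem stmt4 (S K V : ℝ) (hS : 0 < S) (hK : 0 < K) (hV : 0 < V) :
    ∫ n, max (S * Real.exp n - K) 0 ∂(gaussianReal (-V / 2) (Real.toNNReal V)) =
      S * stdNormalCDF ((Real.log (S / K) + V / 2) / Real.sqrt V)
        - K * stdNormalCDF ((Real.log (S / K) - V / 2) / Real.sqrt V) := by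
  have hv : V.toNNReal ≠ 0 := by simpa using hV
  have hVv : (V.toNNReal : ℝ) = V := Real.coe_toNNReal V hV.le
  have htilt (x : ℝ) : exp x * gaussianPDFReal (-V / 2) V.toNNReal x
      = gaussianPDFReal (V / 2) V.toNNReal x := by
    rw [exp_mul_gaussianPDFReal, hVv, show -V / 2 + V / 2 = 0 by ring,
      show -V / 2 + V = V / 2 by ring, exp_zero, one_mul]
  calc ∫ x, max (S * exp x - K) 0 ∂(gaussianReal (-V / 2) V.toNNReal)
      = ∫ x in Ioi (log (K / S)), gaussianPDFReal (-V / 2) V.toNNReal x * (S * exp x - K) := by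
        rw [integral_gaussianReal_eq_integral_smul hv, ← integral_indicator measurableSet_Ioi]
        congr with x
        rw [smul_eq_mul, max_mul_exp_sub_zero_eq_indicator hS hK, indicator_mul_right]
    _ = ∫ x in Ioi (log (K / S)),
          (S * gaussianPDFReal (V / 2) V.toNNReal x - K * gaussianPDFReal (-V / 2) V.toNNReal x) :=
        setIntegral_congr_fun measurableSet_Ioi fun x _ ↦ by rw [← htilt]; ring
    _ = S * stdNormalCDF ((V / 2 - log (K / S)) / √V)
          - K * stdNormalCDF ((-V / 2 - log (K / S)) / √V) := by
        rw [integral_sub, integral_const_mul, integral_const_mul,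
          setIntegral_Ioi_gaussianPDFReal _ _ hv, setIntegral_Ioi_gaussianPDFReal _ _ hv, hVv]
        all_goals exact ((integrable_gaussianPDFReal _ _).const_mul _).integrableOn
    _ = _ := by
        rw [log_div hK.ne' hS.ne', log_div hS.ne' hK.ne']
        congr 3 <;> ring
end

section
/- Let ε₁, …, ε_T (T ≥ 1) be independent standard Gaussian random variables, let v₁, …, v_T > 0, set V = Σ_{i=1}^T v_i and N = Σ_{i=1}^T √(v_i)·ε_i − V/2. Let f : ℝ → ℝ be bounded and measurable. Then the conditional expectation of f(ε_j) given the σ-algebra generated by N equals h(N) almost surely, where h(n) = E[f((√(v_j)/V)·(n + V/2) + Y_j)] and Y_j is a centered Gaussian random variable with variance 1 − v_j/V. -/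
/-!
Write `S = ∑ √vᵢ εᵢ`, so that `N = S - V/2`. The pair `(ε_j, S)` is Gaussian, and with
`c = √v_j / V = cov(ε_j, S) / Var S` the residual `Y = ε_j - c S` is uncorrelated with `S`,
hence independent of it, and it is centered Gaussian of variance `1 - v_j / V`. Since
`ε_j = c (N + V/2) + Y` with `Y` independent of `N`, conditioning `f(ε_j)` on `N` amounts to
integrating out `Y`.
-/

open Real MeasureTheory ProbabilityTheory

namespace ProbabilityTheory

lemma condExp_ae_eq_integral_map_of_indepFun {α β γ F : Type*} {mα : MeasurableSpace α}
    {mβ : MeasurableSpace β} [MeasurableSpace γ] [StandardBorelSpace γ] [Nonempty γ]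
    [NormedAddCommGroup F] [NormedSpace ℝ F] [CompleteSpace F]
    {μ : Measure α} [IsFiniteMeasure μ] {X : α → β} {Y : α → γ}
    (hX : Measurable X) (hY : AEMeasurable Y μ) (hXY : IndepFun X Y μ)
    {φ : β × γ → F} (hφ : StronglyMeasurable φ)
    (hint : Integrable (fun a => φ (X a, Y a)) μ) :
    μ[fun a => φ (X a, Y a) | mβ.comap X] =ᵐ[μ]
      fun a => ∫ y, φ (X a, y) ∂(μ.map Y) := by
  have hκ : condDistrib Y X μ =ᵐ[μ.map X] Kernel.const β (μ.map Y) := by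
    refine condDistrib_ae_eq_of_measure_eq_compProd X hY ?_
    rw [Measure.compProd_const]
    exact (indepFun_iff_map_prod_eq_prod_map_map hX.aemeasurable hY).1 hXY
  filter_upwards [condExp_prod_ae_eq_integral_condDistrib hX hY hφ hint,
    ae_of_ae_map hX.aemeasurable hκ] with a ha hκa
  rw [ha, hκa, Kernel.const_apply]

variable {Ω : Type*} {mΩ : MeasurableSpace Ω} {P : Measure Ω}

lemma variance_sub_const_mul_of_covariance_eq {X S : Ω → ℝ} [IsFiniteMeasure P]
    (hX : MemLp X 2 P) (hS : MemLp S 2 P) {c : ℝ} (hc : cov[X, S; P] = c * Var[S; P]) :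
    Var[fun ω => X ω - c * S ω; P] = Var[X; P] - c * cov[X, S; P] := by
  have hcS : MemLp (fun ω => c * S ω) 2 P := hS.const_mul c
  have hZ : MemLp (fun ω => X ω - c * S ω) 2 P := hX.sub hcS
  rw [← covariance_self hZ.aemeasurable, covariance_fun_sub_left hX hcS hZ,
    covariance_fun_sub_right hX hX hcS, covariance_const_mul_left,
    covariance_fun_sub_right hS hX hcS]
  simp only [covariance_const_mul_right]
  rw [covariance_self hX.aemeasurable, covariance_self hS.aemeasurable, covariance_comm S X, hc]
  ring

lemma HasGaussianLaw.indepFun_sub_const_mul {X S : Ω → ℝ}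
    (hXS : HasGaussianLaw (fun ω => (X ω, S ω)) P) {c : ℝ}
    (hc : cov[X, S; P] = c * Var[S; P]) :
    IndepFun S (fun ω => X ω - c * S ω) P := by
  have := hXS.isProbabilityMeasure
  have hpair : HasGaussianLaw (fun ω => (S ω, X ω - c * S ω)) P := by
    simpa using hXS.map_fun ((ContinuousLinearMap.snd ℝ ℝ ℝ).prod
      (ContinuousLinearMap.fst ℝ ℝ ℝ - c • ContinuousLinearMap.snd ℝ ℝ ℝ))
  refine hpair.indepFun_of_covariance_eq_zero ?_
  have hX := hXS.fst.memLp_two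
  have hS := hXS.snd.memLp_two
  rw [covariance_fun_sub_right hS hX (hS.const_mul c), covariance_const_mul_right,
    covariance_self hS.aemeasurable, covariance_comm, hc, sub_self]

lemma HasGaussianLaw.hasLaw_sub_const_mul {X S : Ω → ℝ}
    (hXS : HasGaussianLaw (fun ω => (X ω, S ω)) P) {c : ℝ}
    (hc : cov[X, S; P] = c * Var[S; P]) :
    HasLaw (fun ω => X ω - c * S ω)
      (gaussianReal (P[X] - c * P[S]) (Var[X; P] - c * cov[X, S; P]).toNNReal) P := by
  have := hXS.isProbabilityMeasure
  have hY : HasGaussianLaw (fun ω => X ω - c * S ω) P := by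
    simpa using
      hXS.map_fun (ContinuousLinearMap.fst ℝ ℝ ℝ - c • ContinuousLinearMap.snd ℝ ℝ ℝ)
  have hX := hXS.fst.memLp_two
  have hS := hXS.snd.memLp_two
  refine ⟨hY.aemeasurable, ?_⟩
  rw [hY.map_eq_gaussianReal,
    integral_sub (hX.integrable one_le_two) ((hS.const_mul c).integrable one_le_two),
    integral_const_mul, variance_sub_const_mul_of_covariance_eq hX hS hc]

section WeightedSum

variable {ι : Type*} [Fintype ι] {ε : ι → Ω → ℝ}

lemma iIndepFun.covariance_fun_sum_mul_right [IsFiniteMeasure P] (hindep : iIndepFun ε P)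
    (hL2 : ∀ i, MemLp (ε i) 2 P) (hvar : ∀ i, Var[ε i; P] = 1) (j : ι) (w : ι → ℝ) :
    cov[ε j, fun ω => ∑ i, w i * ε i ω; P] = w j := by
  classical
  have hcov : ∀ i, cov[ε j, ε i; P] = if i = j then 1 else 0 := by
    intro i
    split_ifs with hij
    · rw [hij, covariance_self (hL2 j).aemeasurable, hvar]
    · exact (hindep.indepFun (Ne.symm hij)).covariance_eq_zero (hL2 j) (hL2 i)
  rw [covariance_fun_sum_right (fun i => (hL2 i).const_mul (w i)) (hL2 j)]
  simp [covariance_const_mul_right, hcov]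

lemma iIndepFun.variance_fun_sum_mul [IsFiniteMeasure P] (hindep : iIndepFun ε P)
    (hL2 : ∀ i, MemLp (ε i) 2 P) (hvar : ∀ i, Var[ε i; P] = 1) (w : ι → ℝ) :
    Var[fun ω => ∑ i, w i * ε i ω; P] = ∑ i, w i ^ 2 := by
  have hS : MemLp (fun ω => ∑ i, w i * ε i ω) 2 P :=
    memLp_finsetSum _ fun i _ => (hL2 i).const_mul (w i)
  rw [← covariance_self hS.aemeasurable,
    covariance_fun_sum_left (fun i => (hL2 i).const_mul (w i)) hS]
  simp [covariance_const_mul_left, hindep.covariance_fun_sum_mul_right hL2 hvar, sq]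

lemma integral_fun_sum_mul_eq_zero (hint : ∀ i, Integrable (ε i) P) (hmean : ∀ i, P[ε i] = 0)
    (w : ι → ℝ) : P[fun ω => ∑ i, w i * ε i ω] = 0 := by
  rw [integral_finsetSum _ fun i _ => (hint i).const_mul (w i)]
  simp [integral_const_mul, hmean]

lemma iIndepFun.hasGaussianLaw_prodMk_fun_sum_mul (hindep : iIndepFun ε P)
    (hgauss : ∀ i, HasGaussianLaw (ε i) P) (j : ι) (w : ι → ℝ) :
    HasGaussianLaw (fun ω => (ε j ω, ∑ i, w i * ε i ω)) P := by
  let L : (ι → ℝ) →L[ℝ] ℝ × ℝ :=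
    (ContinuousLinearMap.proj j).prod (∑ i, w i • ContinuousLinearMap.proj i)
  simpa [L] using (hindep.hasGaussianLaw hgauss).map_fun L

variable {w : ι → ℝ} {V : ℝ}

lemma iIndepFun.covariance_fun_sum_mul_eq_mul_variance (hindep : iIndepFun ε P)
    (hε : ∀ i, HasLaw (ε i) (gaussianReal 0 1) P) (hw : ∑ i, w i ^ 2 = V) (hV : V ≠ 0)
    (j : ι) :
    cov[ε j, fun ω => ∑ i, w i * ε i ω; P]
      = w j / V * Var[fun ω => ∑ i, w i * ε i ω; P] := by
  have := (hε j).isProbabilityMeasure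
  have hL2 i : MemLp (ε i) 2 P := (hε i).hasGaussianLaw.memLp_two
  have hvar i : Var[ε i; P] = 1 := by simp [(hε i).variance_eq]
  rw [hindep.covariance_fun_sum_mul_right hL2 hvar, hindep.variance_fun_sum_mul hL2 hvar, hw,
    div_mul_cancel₀ _ hV]

lemma iIndepFun.indepFun_fun_sum_mul_sub (hindep : iIndepFun ε P)
    (hε : ∀ i, HasLaw (ε i) (gaussianReal 0 1) P) (hw : ∑ i, w i ^ 2 = V) (hV : V ≠ 0)
    (j : ι) :
    IndepFun (fun ω => ∑ i, w i * ε i ω)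
      (fun ω => ε j ω - w j / V * ∑ i, w i * ε i ω) P :=
  (hindep.hasGaussianLaw_prodMk_fun_sum_mul (fun i => (hε i).hasGaussianLaw) j
    w).indepFun_sub_const_mul (hindep.covariance_fun_sum_mul_eq_mul_variance hε hw hV j)

lemma iIndepFun.hasLaw_sub_fun_sum_mul (hindep : iIndepFun ε P)
    (hε : ∀ i, HasLaw (ε i) (gaussianReal 0 1) P) (hw : ∑ i, w i ^ 2 = V) (hV : V ≠ 0)
    (j : ι) :
    HasLaw (fun ω => ε j ω - w j / V * ∑ i, w i * ε i ω)
      (gaussianReal 0 (1 - w j ^ 2 / V).toNNReal) P := by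
  have := (hε j).isProbabilityMeasure
  have hL2 i : MemLp (ε i) 2 P := (hε i).hasGaussianLaw.memLp_two
  have hvar i : Var[ε i; P] = 1 := by simp [(hε i).variance_eq]
  have hmean i : P[ε i] = 0 := by simp [(hε i).integral_eq]
  have hcov := hindep.covariance_fun_sum_mul_eq_mul_variance hε hw hV j
  have hY := (hindep.hasGaussianLaw_prodMk_fun_sum_mul (fun i => (hε i).hasGaussianLaw) j
    w).hasLaw_sub_const_mul hcov
  rw [hmean, integral_fun_sum_mul_eq_zero (fun i => (hL2 i).integrable one_le_two) hmean, hcov,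
    hvar, hindep.variance_fun_sum_mul hL2 hvar, hw] at hY
  convert hY using 3
  · ring
  · field_simp

end WeightedSum

end ProbabilityTheory

theorem stmt8_general {Ω : Type*} [MeasureSpace Ω] [IsProbabilityMeasure (ℙ : Measure Ω)]
    (T : ℕ) (ε : Fin T → Ω → ℝ) (v : Fin T → ℝ)
    (hmeas : ∀ i, Measurable (ε i))
    (hindep : iIndepFun ε ℙ)
    (hgauss : ∀ i, Measure.map (ε i) ℙ = gaussianReal 0 1)
    (hv : ∀ i, 0 < v i)
    (V : ℝ) (hV : V = ∑ i, v i)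
    (N : Ω → ℝ) (hN : N = fun ω => (∑ i, Real.sqrt (v i) * ε i ω) - V / 2)
    (j : Fin T)
    (f : ℝ → ℝ) (hfm : Measurable f) (C : ℝ) (hfb : ∀ x, |f x| ≤ C)
    (h : ℝ → ℝ)
    (hh : h = fun n => ∫ y, f (Real.sqrt (v j) / V * (n + V / 2) + y)
        ∂(gaussianReal 0 (Real.toNNReal (1 - v j / V)))) :
    ℙ[(fun ω => f (ε j ω)) | MeasurableSpace.comap N (borel ℝ)]
      =ᵐ[ℙ] fun ω => h (N ω) := by
  have hε i : HasLaw (ε i) (gaussianReal 0 1) ℙ := ⟨(hmeas i).aemeasurable, hgauss i⟩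
  have hw : ∑ i, √(v i) ^ 2 = V := by simp [Real.sq_sqrt (hv _).le, hV]
  have hV0 : V ≠ 0 := (hV ▸ Finset.sum_pos (fun i _ => hv i) ⟨j, Finset.mem_univ j⟩).ne'
  set S : Ω → ℝ := fun ω => ∑ i, √(v i) * ε i ω
  set Y : Ω → ℝ := fun ω => ε j ω - √(v j) / V * S ω
  have hindY : IndepFun N Y ℙ := hN ▸
    (hindep.indepFun_fun_sum_mul_sub hε hw hV0 j).comp (measurable_sub_const _) measurable_id
  have hY := hindep.hasLaw_sub_fun_sum_mul hε hw hV0 j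
  rw [Real.sq_sqrt (hv j).le] at hY
  have hint : Integrable (fun ω => f (ε j ω)) ℙ :=
    .of_bound (hfm.comp (hmeas j)).aestronglyMeasurable C (ae_of_all _ fun ω => hfb _)
  have hfε : (fun ω => f (ε j ω)) = fun ω => f (√(v j) / V * (N ω + V / 2) + Y ω) := by
    simp [hN, Y, S]
  rw [hfε] at hint ⊢
  refine (condExp_ae_eq_integral_map_of_indepFun (hN ▸ by fun_prop) hY.aemeasurable hindY
    (φ := fun p : ℝ × ℝ => f (√(v j) / V * (p.1 + V / 2) + p.2))
    (hfm.comp (by fun_prop)).stronglyMeasurable hint).trans (ae_of_all _ fun ω => ?_)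
  rw [hY.map_eq, hh]

/-- For independent standard Gaussians `ε₁,…,ε_T`, positive weights `v₁,…,v_T` summing to `V`,
and `N = Σ √(vᵢ)·εᵢ − V/2`, the conditional expectation of `f(ε_j)` given `σ(N)` is `h(N)`
where `h(n) = E[f((√(v_j)/V)·(n + V/2) + Y_j)]` and `Y_j` is a centered Gaussian of variance
`1 − v_j/V`. -/
theorem stmt8 {Ω : Type*} [MeasureSpace Ω] [IsProbabilityMeasure (ℙ : Measure Ω)]
    (T : ℕ) (hT : 1 ≤ T) (ε : Fin T → Ω → ℝ) (v : Fin T → ℝ)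
    (hmeas : ∀ i, Measurable (ε i))
    (hindep : iIndepFun ε ℙ)
    (hgauss : ∀ i, Measure.map (ε i) ℙ = gaussianReal 0 1)
    (hv : ∀ i, 0 < v i)
    (V : ℝ) (hV : V = ∑ i, v i)
    (N : Ω → ℝ) (hN : N = fun ω => (∑ i, Real.sqrt (v i) * ε i ω) - V / 2)
    (j : Fin T)
    (f : ℝ → ℝ) (hfm : Measurable f) (C : ℝ) (hfb : ∀ x, |f x| ≤ C)
    (h : ℝ → ℝ)
    (hh : h = fun n => ∫ y, f (Real.sqrt (v j) / V * (n + V / 2) + y)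
        ∂(gaussianReal 0 (Real.toNNReal (1 - v j / V)))) :
    ℙ[(fun ω => f (ε j ω)) | MeasurableSpace.comap N (borel ℝ)]
      =ᵐ[ℙ] fun ω => h (N ω) :=
  stmt8_general T ε v hmeas hindep hgauss hv V hV N hN j f hfm C hfb h hh
end

section
/- Let ε₁, …, ε_T (T ≥ 2) be independent standard Gaussian random variables, let v₁, …, v_T > 0, set V = Σ_{i=1}^T v_i and N = Σ_{i=1}^T √(v_i)·ε_i − V/2. Let S, K > 0, let f : ℝ → ℝ be bounded and measurable, and let i ≠ j be two indices in {1, …, T}. Then S·E[f(ε_j)·(ε_i/√(v_i) − 1)·e^N·1_{N > ln(K/S)}] = K·E[f((√(v_j)/V)·(ln(K/S) + V/2) + Y_j)]·exp(−(ln(K/S) + V/2)²/(2V))/√(2πV), where Y_j is a centered Gaussian random variable with variance 1 − v_j/V. -/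
/-!
Write `N = Y + R + Z - V / 2` with `Y = √v_j ε_j`, `Z = √v_i ε_i` and `R` the sum of the other
terms: independent centred Gaussians of variances `v_j`, `V - v_j - v_i` and `v_i`. With `φ_t` the
centred Gaussian density of variance `t`, the weight is a derivative,
`(z / t - 1) e^z φ_t(z) = -(e^z φ_t(z))'`, so integrating out `Z` over `{N > a}` leaves only the
boundary term `e^a φ_{v_i}(a + V/2 - Y - R)`. Integrating out `R` convolves this into
`e^a φ_{V - v_j}(a + V/2 - Y)`, and the product of two Gaussian densities
`φ_{v_j}(y) φ_{V - v_j}(c - y) = φ_V(c) · φ(y; v_j c / V, v_j (V - v_j) / V)` turns the last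
integral over `Y` into `φ_V(a + V/2)` times a Gaussian expectation; dividing by `√v_j` gives the
law of `√v_j (a + V/2) / V + Y_j`. Finally `S e^a = K` for `a = ln (K / S)`.
-/

open Real MeasureTheory ProbabilityTheory Set Filter Topology
open scoped NNReal

namespace ProbabilityTheory

lemma integrable_gaussianPDFReal_mul {μ : ℝ} {v : ℝ≥0} (hv : v ≠ 0) {h : ℝ → ℝ}
    (hh : Integrable h (gaussianReal μ v)) :
    Integrable (fun x => gaussianPDFReal μ v x * h x) := by
  rw [gaussianReal_of_var_ne_zero _ hv, integrable_withDensity_iff_integrable_smul'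
    (measurable_gaussianPDF _ _) (ae_of_all _ fun _ => gaussianPDF_lt_top)] at hh
  simpa [toReal_gaussianPDF] using hh

lemma integrable_mul_exp_gaussianReal {μ : ℝ} {v : ℝ≥0} (t : ℝ) :
    Integrable (fun x => x * exp (t * x)) (gaussianReal μ v) := by
  simpa using integrable_pow_mul_exp_of_integrable_exp_mul (X := id) one_ne_zero
    (integrable_exp_mul_gaussianReal _) (integrable_exp_mul_gaussianReal _) 1

lemma integrable_abs_mul_exp_gaussianReal {μ : ℝ} {v : ℝ≥0} (t : ℝ) :
    Integrable (fun x => |x| * exp (t * x)) (gaussianReal μ v) := by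
  simpa using integrable_pow_abs_mul_exp_of_integrable_exp_mul (X := id) one_ne_zero
    (integrable_exp_mul_gaussianReal _) (integrable_exp_mul_gaussianReal _) 1

lemma hasDerivAt_exp_mul_gaussianPDFReal {t : ℝ≥0} (b z : ℝ) :
    HasDerivAt (fun z => exp (b + z) * gaussianPDFReal 0 t z)
      ((1 - z / t) * exp (b + z) * gaussianPDFReal 0 t z) z := by
  have hexponent : HasDerivAt (fun z : ℝ => b + z - z ^ 2 / (2 * t)) (1 - z / t) z :=
    (((hasDerivAt_id' z).const_add b).fun_sub
      ((hasDerivAt_pow 2 z).div_const (2 * t))).congr_deriv (by ring)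
  have hform : ∀ z, exp (b + z) * gaussianPDFReal 0 t z
      = (√(2 * π * t))⁻¹ * exp (b + z - z ^ 2 / (2 * t)) := fun z => by
    rw [gaussianPDFReal, sub_zero, mul_left_comm, ← exp_add]
    congr 2
    ring
  simp only [hform]
  exact (hexponent.exp.const_mul _).congr_deriv (by rw [mul_assoc (1 - z / t), hform]; ring)

theorem integral_div_sub_one_mul_exp_mul_ite_gaussianReal {t : ℝ≥0} (ht : t ≠ 0) (a b : ℝ) :
    ∫ z, (z / t - 1) * exp (b + z) * (if a < b + z then 1 else 0) ∂gaussianReal 0 t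
      = exp a * gaussianPDFReal 0 t (a - b) := by
  set G : ℝ → ℝ := fun z => -(exp (b + z) * gaussianPDFReal 0 t z)
  set G' : ℝ → ℝ := fun z => gaussianPDFReal 0 t z * ((z / t - 1) * exp (b + z))
  have hderiv : ∀ z, HasDerivAt G (G' z) z := fun z =>
    (hasDerivAt_exp_mul_gaussianPDFReal b z).fun_neg.congr_deriv (by ring)
  have hG' : Integrable G' := by
    refine integrable_gaussianPDFReal_mul ht ?_
    have := ((integrable_mul_exp_gaussianReal (μ := 0) (v := t) 1).const_mul (exp b / t)).sub
      ((integrable_exp_mul_gaussianReal (μ := 0) (v := t) 1).const_mul (exp b))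
    refine this.congr (ae_of_all _ fun z => ?_)
    simp only [Pi.sub_apply, exp_add, one_mul]; ring
  have hG : Integrable G := by
    have := (integrable_gaussianPDFReal_mul ht
      (integrable_exp_mul_gaussianReal (μ := 0) (v := t) 1)).const_mul (-exp b)
    refine this.congr (ae_of_all _ fun z => ?_)
    simp only [G, exp_add, one_mul]; ring
  have hlim : Tendsto G atTop (𝓝 0) := tendsto_zero_of_hasDerivAt_of_integrableOn_Ioi
    (a := 0) (fun z _ => hderiv z) hG'.integrableOn hG.integrableOn
  rw [integral_gaussianReal_eq_integral_smul ht]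
  calc ∫ z, gaussianPDFReal 0 t z • ((z / t - 1) * exp (b + z) * (if a < b + z then 1 else 0))
      = ∫ z in Ioi (a - b), G' z := by
        rw [← integral_indicator measurableSet_Ioi]
        congr 1 with z
        by_cases hz : a < b + z
        · simp [G', hz, show z ∈ Ioi (a - b) by simp; linarith]
        · simp [G', hz, show z ∉ Ioi (a - b) by simp; linarith]
    _ = 0 - G (a - b) := integral_Ioi_of_hasDerivAt_of_tendsto' (fun z _ => hderiv z)
        hG'.integrableOn hlim
    _ = exp a * gaussianPDFReal 0 t (a - b) := by simp [G]

lemma gaussianPDFReal_mul_gaussianPDFReal_sub {s u : ℝ≥0} (hs : s ≠ 0) (hu : u ≠ 0) (c y : ℝ) :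
    gaussianPDFReal 0 s y * gaussianPDFReal 0 u (c - y)
      = gaussianPDFReal 0 (s + u) c * gaussianPDFReal (s * c / (s + u)) (s * u / (s + u)) y := by
  have hs' : (0 : ℝ) < s := NNReal.coe_pos.mpr (pos_iff_ne_zero.mpr hs)
  have hu' : (0 : ℝ) < u := NNReal.coe_pos.mpr (pos_iff_ne_zero.mpr hu)
  simp only [gaussianPDFReal, NNReal.coe_add, NNReal.coe_div, NNReal.coe_mul, sub_zero]
  rw [mul_mul_mul_comm, mul_mul_mul_comm _ (exp _), ← mul_inv, ← mul_inv, ← exp_add, ← exp_add,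
    ← sqrt_mul (by positivity), ← sqrt_mul (by positivity)]
  congr 1
  · congr 2
    field_simp
  · congr 1
    field_simp
    ring

lemma integral_gaussianPDFReal_sub_mul_gaussianReal {s u : ℝ≥0} (hs : s ≠ 0) (hu : u ≠ 0)
    (c : ℝ) (g : ℝ → ℝ) :
    ∫ y, gaussianPDFReal 0 u (c - y) * g y ∂gaussianReal 0 s
      = gaussianPDFReal 0 (s + u) c
        * ∫ y, g y ∂gaussianReal (s * c / (s + u)) (s * u / (s + u)) := by
  have hsu : s * u / (s + u) ≠ 0 := by positivity
  rw [integral_gaussianReal_eq_integral_smul hs, integral_gaussianReal_eq_integral_smul hsu,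
    ← integral_const_mul]
  congr 1 with y
  simp only [smul_eq_mul]
  rw [← mul_assoc, gaussianPDFReal_mul_gaussianPDFReal_sub hs hu]
  ring

lemma integral_gaussianPDFReal_sub_gaussianReal {u : ℝ≥0} (hu : u ≠ 0) (w : ℝ≥0) (c : ℝ) :
    ∫ r, gaussianPDFReal 0 u (c - r) ∂gaussianReal 0 w = gaussianPDFReal 0 (w + u) c := by
  rcases eq_or_ne w 0 with rfl | hw
  · simp [gaussianReal_zero_var]
  · simpa using integral_gaussianPDFReal_sub_mul_gaussianReal hw hu c 1

lemma integral_comp_div_sqrt_gaussianReal {w : ℝ≥0} (hw : w ≠ 0) (m : ℝ) (σ : ℝ≥0)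
    (g : ℝ → ℝ) :
    ∫ y, g (y / √w) ∂gaussianReal m (w * σ) = ∫ y, g (m / √w + y) ∂gaussianReal 0 σ := by
  have hsqrt : √(w : ℝ) ≠ 0 := by positivity
  have hlaw : gaussianReal m (w * σ)
      = ((gaussianReal 0 σ).map (m / √w + ·)).map (√w * ·) := by
    rw [gaussianReal_map_const_add, gaussianReal_map_const_mul, zero_add, mul_div_cancel₀ _ hsqrt]
    congr
    ext
    simp
  rw [hlaw, (measurableEmbedding_mulLeft₀ hsqrt).integral_map,
    (measurableEmbedding_addLeft _).integral_map]
  simp [hsqrt]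

lemma integrable_div_sub_one_mul_exp_mul_ite_prod (s w t : ℝ≥0) {g : ℝ → ℝ}
    (hg : Measurable g) {C : ℝ} (hC : ∀ y, |g y| ≤ C) (a m : ℝ) :
    Integrable (fun p : ℝ × ℝ × ℝ => g p.1 * (p.2.2 / t - 1) * exp (p.1 + p.2.1 + p.2.2 - m)
        * (if a < p.1 + p.2.1 + p.2.2 - m then 1 else 0))
      ((gaussianReal 0 s).prod ((gaussianReal 0 w).prod (gaussianReal 0 t))) := by
  have hexp {v : ℝ≥0} : Integrable (fun x => exp x) (gaussianReal 0 v) := by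
    simpa using integrable_exp_mul_gaussianReal (μ := 0) (v := v) 1
  have hB3 : Integrable (fun z => (|z| / t + 1) * exp z) (gaussianReal 0 t) := by
    refine (((integrable_abs_mul_exp_gaussianReal 1).div_const t).add hexp).congr
      (ae_of_all _ fun z => ?_)
    simp only [Pi.add_apply, one_mul]; ring
  have hsum : Measurable fun p : ℝ × ℝ × ℝ => p.1 + p.2.1 + p.2.2 - m := by fun_prop
  have hmeas : Measurable fun p : ℝ × ℝ × ℝ => g p.1 * (p.2.2 / t - 1)
      * exp (p.1 + p.2.1 + p.2.2 - m) * (if a < p.1 + p.2.1 + p.2.2 - m then 1 else 0) := by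
    have hind : Measurable fun p : ℝ × ℝ × ℝ =>
        if a < p.1 + p.2.1 + p.2.2 - m then (1 : ℝ) else 0 :=
      Measurable.ite (measurableSet_lt measurable_const hsum) measurable_const measurable_const
    fun_prop
  refine ((hexp.const_mul (C * exp (-m))).mul_prod (hexp.mul_prod hB3)).mono'
    hmeas.aestronglyMeasurable (ae_of_all _ fun ⟨y, r, z⟩ => ?_)
  have hC0 : 0 ≤ C := (abs_nonneg _).trans (hC 0)
  have hweight : |z / t - 1| ≤ |z| / t + 1 := (abs_sub _ _).trans (by simp [abs_div])
  have hind : |(if a < y + r + z - m then (1 : ℝ) else 0)| ≤ 1 := by split_ifs <;> simp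
  simp only [norm_mul, Real.norm_eq_abs, abs_exp]
  calc |g y| * |z / t - 1| * exp (y + r + z - m) * |if a < y + r + z - m then (1 : ℝ) else 0|
      ≤ C * (|z| / t + 1) * exp (y + r + z - m) * 1 := by gcongr; exact hC y
    _ = C * exp (-m) * exp y * (exp r * ((|z| / t + 1) * exp z)) := by
      simp only [exp_add, exp_sub, exp_neg]; field_simp

theorem integral_div_sub_one_mul_exp_mul_ite_prod {s t : ℝ≥0} (hs : s ≠ 0)
    (ht : t ≠ 0) (w : ℝ≥0) {g : ℝ → ℝ} (hg : Measurable g) {C : ℝ} (hC : ∀ y, |g y| ≤ C)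
    (a m : ℝ) :
    ∫ p, g p.1 * (p.2.2 / t - 1) * exp (p.1 + p.2.1 + p.2.2 - m)
        * (if a < p.1 + p.2.1 + p.2.2 - m then 1 else 0)
        ∂(gaussianReal 0 s).prod ((gaussianReal 0 w).prod (gaussianReal 0 t))
      = exp a * gaussianPDFReal 0 (s + (w + t)) (a + m)
        * ∫ y, g y ∂gaussianReal (s * (a + m) / (s + (w + t))) (s * (w + t) / (s + (w + t))) := by
  have hint := integrable_div_sub_one_mul_exp_mul_ite_prod s w t hg hC a m
  rw [integral_prod _ hint]
  have hinner : ∀ᵐ y ∂gaussianReal 0 s, ∫ q, g y * (q.2 / t - 1) * exp (y + q.1 + q.2 - m)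
        * (if a < y + q.1 + q.2 - m then 1 else 0) ∂(gaussianReal 0 w).prod (gaussianReal 0 t)
      = gaussianPDFReal 0 (w + t) (a + m - y) * (exp a * g y) := by
    filter_upwards [hint.prod_right_ae] with y hy
    rw [integral_prod _ hy]
    calc _ = ∫ r, exp a * g y * gaussianPDFReal 0 t (a + m - y - r) ∂gaussianReal 0 w := by
          congr 1 with r
          have hsplit : ∀ z, y + r + z - m = (y + r - m) + z := fun z => by ring
          simp only [hsplit, mul_assoc, integral_const_mul]
          simp only [← mul_assoc, integral_div_sub_one_mul_exp_mul_ite_gaussianReal ht]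
          rw [show a - (y + r - m) = a + m - y - r by ring]
          ring
      _ = _ := by
          rw [integral_const_mul, integral_gaussianPDFReal_sub_gaussianReal ht]; ring
  rw [integral_congr_ae hinner, integral_gaussianPDFReal_sub_mul_gaussianReal hs (by positivity),
    integral_const_mul]
  push_cast
  ring

variable {Ω ι : Type*} {mΩ : MeasurableSpace Ω} {P : Measure Ω} {X : ι → Ω → ℝ}

lemma iIndepFun.hasLaw_sum_gaussianReal (hX : iIndepFun X P) {m : ι → ℝ} {w : ι → ℝ≥0}
    (hlaw : ∀ l, HasLaw (X l) (gaussianReal (m l) (w l)) P) (s : Finset ι) :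
    HasLaw (fun ω => ∑ l ∈ s, X l ω) (gaussianReal (∑ l ∈ s, m l) (∑ l ∈ s, w l)) P := by
  classical
  have := hX.isProbabilityMeasure
  induction s using Finset.induction_on with
  | empty =>
    simpa [gaussianReal_zero_var] using
      hasLaw_dirac_of_ae_eq (P := P) (X := fun _ => (0 : ℝ)) (ae_of_all _ fun _ => rfl)
  | insert k s hk ih =>
    have hindep : IndepFun (X k) (fun ω => ∑ l ∈ s, X l ω) P := by
      simpa [Finset.sum_fn] using
        (hX.indepFun_finsetSum_of_notMem₀ (fun l => (hlaw l).aemeasurable) hk).symm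
    simp only [Finset.sum_insert hk]
    rw [← gaussianReal_conv_gaussianReal]
    exact hindep.hasLaw_fun_add (hlaw k) ih

lemma iIndepFun.indepFun_prodMk_sum {i j : ι} {s : Finset ι} (hX : iIndepFun X P)
    (hmeas : ∀ l, Measurable (X l)) (hij : i ≠ j) (hjs : j ∉ s) :
    IndepFun (X j) (fun ω => (∑ l ∈ s, X l ω, X i ω)) P := by
  classical
  have hdisj : Disjoint {j} (insert i s) := by simp [hij.symm, hjs]
  have hφ : Measurable fun x : ↥({j} : Finset ι) → ℝ => x ⟨j, Finset.mem_singleton_self j⟩ :=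
    measurable_pi_apply _
  have hψ : Measurable fun x : ↥(insert i s) → ℝ =>
      (∑ l ∈ s.attach, x ⟨l, Finset.mem_insert_of_mem l.2⟩, x ⟨i, Finset.mem_insert_self i s⟩) := by
    fun_prop
  convert (hX.indepFun_finset _ _ hdisj hmeas).comp hφ hψ using 1
  · rfl
  · ext ω
    · exact (Finset.sum_attach s (X · ω)).symm
    · rfl

lemma iIndepFun.hasLaw_prodMk_sum_prodMk {i j : ι} {s : Finset ι}
    (hX : iIndepFun X P) (hmeas : ∀ l, Measurable (X l)) {μj μs μi : Measure ℝ}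
    (hj : HasLaw (X j) μj P) (hs : HasLaw (fun ω => ∑ l ∈ s, X l ω) μs P) (hi : HasLaw (X i) μi P)
    (hij : i ≠ j) (his : i ∉ s) (hjs : j ∉ s) :
    HasLaw (fun ω => (X j ω, ∑ l ∈ s, X l ω, X i ω)) (μj.prod (μs.prod μi)) P := by
  have := hX.isProbabilityMeasure
  have hsi : IndepFun (fun ω => ∑ l ∈ s, X l ω) (X i) P := by
    simpa [Finset.sum_fn] using hX.indepFun_finsetSum_of_notMem hmeas his
  exact (hX.indepFun_prodMk_sum hmeas hij hjs).hasLaw_prod hj (hsi.hasLaw_prod hs hi)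

lemma iIndepFun.hasLaw_sqrt_mul_prodMk_sum_prodMk {ε : ι → Ω → ℝ} (hε : iIndepFun ε P)
    (hmeas : ∀ l, Measurable (ε l)) (hgauss : ∀ l, P.map (ε l) = gaussianReal 0 1) (v : ι → ℝ≥0)
    {i j : ι} {s : Finset ι} (hij : i ≠ j) (his : i ∉ s) (hjs : j ∉ s) :
    HasLaw (fun ω => (√(v j) * ε j ω, ∑ l ∈ s, √(v l) * ε l ω, √(v i) * ε i ω))
      ((gaussianReal 0 (v j)).prod ((gaussianReal 0 (∑ l ∈ s, v l)).prod (gaussianReal 0 (v i))))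
      P := by
  have hX : iIndepFun (fun l ω => √(v l) * ε l ω) P := hε.comp _ fun l => by fun_prop
  have hlaw (l : ι) : HasLaw (fun ω => √(v l) * ε l ω) (gaussianReal 0 (v l)) P := by
    convert gaussianReal_const_mul ⟨(hmeas l).aemeasurable, hgauss l⟩ √(v l) using 2
    · simp
    · ext; simp
  have hsum := hX.hasLaw_sum_gaussianReal (m := 0) hlaw s
  simp only [Pi.zero_apply, Finset.sum_const_zero] at hsum
  exact hX.hasLaw_prodMk_sum_prodMk (fun l => (hmeas l).const_mul _) (hlaw j) hsum (hlaw i)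
    hij his hjs

theorem HasLaw.integral_comp_div_sqrt_mul_div_sub_one_mul_exp_mul_ite {Y R Z : Ω → ℝ}
    {s w t : ℝ≥0} (hlaw : HasLaw (fun ω => (Y ω, R ω, Z ω))
      ((gaussianReal 0 s).prod ((gaussianReal 0 w).prod (gaussianReal 0 t))) P)
    (hs : s ≠ 0) (ht : t ≠ 0) {f : ℝ → ℝ} (hf : Measurable f) {C : ℝ} (hC : ∀ x, |f x| ≤ C)
    (a m : ℝ) :
    ∫ ω, f (Y ω / √s) * (Z ω / t - 1) * exp (Y ω + R ω + Z ω - m)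
        * (if a < Y ω + R ω + Z ω - m then 1 else 0) ∂P
      = exp a * (∫ y, f (√s / (s + w + t) * (a + m) + y)
          ∂gaussianReal 0 (1 - s / (s + w + t : ℝ)).toNNReal)
        * exp (-(a + m) ^ 2 / (2 * (s + w + t))) / √(2 * π * (s + w + t)) := by
  have hs' : (0 : ℝ) < s := NNReal.coe_pos.mpr (pos_iff_ne_zero.mpr hs)
  have hV : (0 : ℝ) < s + w + t := by positivity
  have hvar : s * (w + t) / (s + (w + t)) = s * (1 - s / (s + w + t : ℝ)).toNNReal := by
    rw [mul_div_assoc]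
    congr 1
    ext
    rw [Real.coe_toNNReal _ (by rw [sub_nonneg, div_le_one hV]; linarith [w.2, t.2])]
    push_cast
    field_simp
    ring
  have hmean : s * (a + m) / (s + (w + t)) / √s = √s / (s + w + t) * (a + m) := by
    have := sq_sqrt hs'.le
    field_simp
    rw [this]
    ring
  have hg : Measurable fun y => f (y / √s) := by fun_prop
  have htransfer := hlaw.integral_comp
    (integrable_div_sub_one_mul_exp_mul_ite_prod s w t hg (fun _ => hC _) a m).aestronglyMeasurable
  simp only [Function.comp_def] at htransfer
  rw [htransfer, integral_div_sub_one_mul_exp_mul_ite_prod hs ht w hg (fun _ => hC _) a m, hvar,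
    integral_comp_div_sqrt_gaussianReal hs, hmean, gaussianPDFReal, sub_zero]
  push_cast
  rw [← add_assoc]
  ring

end ProbabilityTheory

theorem stmt9_general {Ω : Type*} [MeasureSpace Ω] [IsProbabilityMeasure (ℙ : Measure Ω)]
    (T : ℕ) (ε : Fin T → Ω → ℝ) (v : Fin T → ℝ)
    (hmeas : ∀ k, Measurable (ε k))
    (hindep : iIndepFun ε ℙ)
    (hgauss : ∀ k, Measure.map (ε k) ℙ = gaussianReal 0 1)
    (hv : ∀ k, 0 < v k)
    (V : ℝ) (hV : V = ∑ k, v k)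
    (N : Ω → ℝ) (hN : N = fun ω => (∑ k, Real.sqrt (v k) * ε k ω) - V / 2)
    (S K : ℝ) (hS : 0 < S) (hK : 0 < K)
    (f : ℝ → ℝ) (hfm : Measurable f) (C : ℝ) (hfb : ∀ x, |f x| ≤ C)
    (i j : Fin T) (hij : i ≠ j) :
    S * ∫ ω, f (ε j ω) * (ε i ω / Real.sqrt (v i) - 1) * Real.exp (N ω)
          * (if Real.log (K / S) < N ω then (1 : ℝ) else 0) =
      K * (∫ y, f (Real.sqrt (v j) / V * (Real.log (K / S) + V / 2) + y)
            ∂(gaussianReal 0 (Real.toNNReal (1 - v j / V))))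
        * Real.exp (-(Real.log (K / S) + V / 2) ^ 2 / (2 * V))
        / Real.sqrt (2 * Real.pi * V) := by
  lift v to Fin T → ℝ≥0 using fun k => (hv k).le
  subst hV hN
  set a := Real.log (K / S)
  set m : ℝ := (∑ k, (v k : ℝ)) / 2
  set s := (Finset.univ.erase j).erase i with hs
  have hsplit (x : Fin T → ℝ) : ∑ k, x k = x j + ∑ l ∈ s, x l + x i := by
    rw [hs, ← Finset.add_sum_erase _ _ (Finset.mem_univ j),
      ← Finset.add_sum_erase _ _ (Finset.mem_erase.mpr ⟨hij, Finset.mem_univ i⟩)]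
    ring
  have hlaw := hindep.hasLaw_sqrt_mul_prodMk_sum_prodMk hmeas hgauss v (s := s) hij
    (Finset.notMem_erase i _) (fun h => Finset.notMem_erase j _ (Finset.mem_of_mem_erase h))
  have hvj : v j ≠ 0 := NNReal.coe_ne_zero.mp (hv j).ne'
  have hvi : v i ≠ 0 := NNReal.coe_ne_zero.mp (hv i).ne'
  have hpoint (ω : Ω) : f (ε j ω) * (ε i ω / √(v i) - 1) * exp (∑ k, √(v k) * ε k ω - m)
        * (if a < ∑ k, √(v k) * ε k ω - m then 1 else 0)
      = f (√(v j) * ε j ω / √(v j)) * (√(v i) * ε i ω / v i - 1)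
        * exp (√(v j) * ε j ω + ∑ l ∈ s, √(v l) * ε l ω + √(v i) * ε i ω - m)
        * (if a < √(v j) * ε j ω + ∑ l ∈ s, √(v l) * ε l ω + √(v i) * ε i ω - m then 1 else 0) := by
    have hsqrt (l : Fin T) : √(v l : ℝ) ≠ 0 := (sqrt_pos.mpr (hv l)).ne'
    have hεi : √(v i) * ε i ω / v i = ε i ω / √(v i) := by
      field_simp [hsqrt i]
      rw [sq_sqrt (v i).coe_nonneg, mul_comm]
    rw [mul_div_cancel_left₀ _ (hsqrt j), hεi, ← hsplit fun k => √(v k) * ε k ω]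
  have hV : ∑ k, (v k : ℝ) = ↑(v j) + ↑(∑ l ∈ s, v l) + ↑(v i) := by
    push_cast
    exact hsplit _
  rw [integral_congr_ae (ae_of_all _ hpoint),
    hlaw.integral_comp_div_sqrt_mul_div_sub_one_mul_exp_mul_ite hvj hvi hfm hfb a m, hV,
    exp_log (div_pos hK hS)]
  field_simp

/-- For independent standard Gaussians `ε₁,…,ε_T`, positive weights `v₁,…,v_T` summing to `V`,
`N = Σ √(vᵢ)·εᵢ − V/2`, a bounded measurable `f` and indices `i ≠ j`:
`S·E[f(ε_j)·(ε_i/√(v_i) − 1)·e^N·1_{N > ln(K/S)}]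
  = K·E[f((√(v_j)/V)·(ln(K/S) + V/2) + Y_j)]·exp(−(ln(K/S)+V/2)²/(2V))/√(2πV)`,
where `Y_j` is a centered Gaussian of variance `1 − v_j/V`. -/
theorem stmt9 {Ω : Type*} [MeasureSpace Ω] [IsProbabilityMeasure (ℙ : Measure Ω)]
    (T : ℕ) (hT : 2 ≤ T) (ε : Fin T → Ω → ℝ) (v : Fin T → ℝ)
    (hmeas : ∀ k, Measurable (ε k))
    (hindep : iIndepFun ε ℙ)
    (hgauss : ∀ k, Measure.map (ε k) ℙ = gaussianReal 0 1)
    (hv : ∀ k, 0 < v k)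
    (V : ℝ) (hV : V = ∑ k, v k)
    (N : Ω → ℝ) (hN : N = fun ω => (∑ k, Real.sqrt (v k) * ε k ω) - V / 2)
    (S K : ℝ) (hS : 0 < S) (hK : 0 < K)
    (f : ℝ → ℝ) (hfm : Measurable f) (C : ℝ) (hfb : ∀ x, |f x| ≤ C)
    (i j : Fin T) (hij : i ≠ j) :
    S * ∫ ω, f (ε j ω) * (ε i ω / Real.sqrt (v i) - 1) * Real.exp (N ω)
          * (if Real.log (K / S) < N ω then (1 : ℝ) else 0) =
      K * (∫ y, f (Real.sqrt (v j) / V * (Real.log (K / S) + V / 2) + y)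
            ∂(gaussianReal 0 (Real.toNNReal (1 - v j / V))))
        * Real.exp (-(Real.log (K / S) + V / 2) ^ 2 / (2 * V))
        / Real.sqrt (2 * Real.pi * V) :=
  stmt9_general T ε v hmeas hindep hgauss hv V hV N hN S K hS hK f hfm C hfb i j hij
end

section
/- Let ε₁, …, ε_T (T ≥ 2) be independent standard Gaussian random variables, let v₁, …, v_T > 0, set V = Σ_{i=1}^T v_i and N = Σ_{i=1}^T √(v_i)·ε_i − V/2. Let f : ℝ → ℝ be bounded and measurable, let λ_j^i (1 ≤ j < i ≤ T) be real coefficients, set ξ_i = Σ_{j=1}^{i−1} λ_j^i·f(ε_j) and Ñ = (1/2)·Σ_{i=1}^T ξ_i·(ε_i/√(v_i) − 1). Fix S, K > 0 and define F(ν) = E[(S·e^{N + ν·Ñ} − K)₊]. Then F is differentiable at ν = 0 with F'(0) = S·E[Ñ·e^N·1_{N > ln(K/S)}]. -/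
/-!
For each `ω`, the payoff `ν ↦ (S e^{N + ν Ñ} − K)₊` is differentiable at `0` with derivative
`S Ñ e^N 1_{N > ln(K/S)}` unless `N = ln(K/S)`. That event is null, since `N` contains the
atomless summand `√v₁ ε₁`, independent of the rest. On `|ν| < 1` the payoff is Lipschitz with
constant `S e^{N + |Ñ|} |Ñ| ≤ S e^{N + 2|Ñ|}`. Because the `ξ_i` are bounded, `2|Ñ|` is at most an
affine function of the `|ε_i|`. So this constant is dominated by a product of independent factors
`exp (a ε_i + b |ε_i|)`, each integrable against a Gaussian, and we may differentiate under
the integral sign.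
-/

open Real MeasureTheory ProbabilityTheory

lemma HasDerivAt.max_zero {g : ℝ → ℝ} {g' x : ℝ} (hg : HasDerivAt g g' x) (hx : g x ≠ 0) :
    HasDerivAt (fun t => max (g t) 0) (if 0 < g x then g' else 0) x := by
  rcases hx.lt_or_gt with hneg | hpos
  · have hev : (fun t => max (g t) 0) =ᶠ[nhds x] fun _ => 0 :=
      (hg.continuousAt.eventually (eventually_lt_nhds hneg)).mono fun t ht => max_eq_right ht.le
    rw [if_neg hneg.not_gt]
    exact (hasDerivAt_const x 0).congr_of_eventuallyEq hev
  · have hev : (fun t => max (g t) 0) =ᶠ[nhds x] g :=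
      (hg.continuousAt.eventually (eventually_gt_nhds hpos)).mono fun t ht => max_eq_left ht.le
    rw [if_pos hpos]
    exact hg.congr_of_eventuallyEq hev

lemma hasDerivAt_mul_exp_add_mul_sub (S K x y ν : ℝ) :
    HasDerivAt (fun ν => S * exp (x + ν * y) - K) (S * (exp (x + ν * y) * y)) ν :=
  ((((hasDerivAt_id ν).mul_const y).const_add x).exp.const_mul S).sub_const K |>.congr_deriv
    (by simp)

section CallPayoff

variable {S K : ℝ}

lemma lt_mul_exp_iff_log_div_lt (hS : 0 < S) (hK : 0 < K) {x : ℝ} :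
    K < S * exp x ↔ log (K / S) < x := by
  rw [log_lt_iff_lt_exp (div_pos hK hS), div_lt_iff₀' hS]

lemma mul_exp_eq_iff_eq_log_div (hS : 0 < S) (hK : 0 < K) {x : ℝ} :
    S * exp x = K ↔ x = log (K / S) := by
  constructor
  · rintro rfl
    rw [mul_div_cancel_left₀ _ hS.ne', log_exp]
  · rintro rfl
    rw [exp_log (div_pos hK hS), mul_div_cancel₀ _ hS.ne']

lemma hasDerivAt_max_mul_exp_sub (hS : 0 < S) (hK : 0 < K) {x : ℝ} (hx : x ≠ log (K / S))
    (y : ℝ) :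
    HasDerivAt (fun ν => max (S * exp (x + ν * y) - K) 0)
      (S * (y * exp x * if log (K / S) < x then 1 else 0)) 0 := by
  refine ((hasDerivAt_mul_exp_add_mul_sub S K x y 0).max_zero ?_).congr_deriv ?_
  · simpa [sub_eq_zero, mul_exp_eq_iff_eq_log_div hS hK] using hx
  · simp only [zero_mul, add_zero, sub_pos, lt_mul_exp_iff_log_div_lt hS hK]
    split_ifs <;> ring

lemma lipschitzOnWith_max_mul_exp_sub (hS : 0 ≤ S) (x y : ℝ) :
    LipschitzOnWith (nnabs (S * (exp (x + |y|) * |y|)))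
      (fun ν => max (S * exp (x + ν * y) - K) 0) (Metric.ball 0 1) := by
  have hlip : LipschitzOnWith (nnabs (S * (exp (x + |y|) * |y|)))
      (fun ν => S * exp (x + ν * y) - K) (Metric.ball 0 1) := by
    refine (convex_ball 0 1).lipschitzOnWith_of_nnnorm_hasDerivWithin_le
      (fun ν _ => (hasDerivAt_mul_exp_add_mul_sub S K x y ν).hasDerivWithinAt) fun ν hν => ?_
    have hνy : ν * y ≤ |y| := by
      have : |ν| < 1 := by simpa using hν
      calc ν * y ≤ |ν| * |y| := by rw [← abs_mul]; exact le_abs_self _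
        _ ≤ |y| := mul_le_of_le_one_left (abs_nonneg y) this.le
    rw [← NNReal.coe_le_coe, coe_nnnorm, coe_nnabs,
      abs_of_nonneg (mul_nonneg hS (by positivity)), norm_mul, norm_mul, norm_of_nonneg hS,
      norm_of_nonneg (exp_pos _).le, norm_eq_abs]
    gcongr
  have := (LipschitzWith.id.max_const 0).comp_lipschitzOnWith hlip
  rwa [one_mul] at this

end CallPayoff

lemma exp_add_abs_mul_abs_le_exp_add_two_mul_abs (x y : ℝ) :
    exp (x + |y|) * |y| ≤ exp (x + 2 * |y|) :=
  calc exp (x + |y|) * |y| ≤ exp (x + |y|) * exp |y| := by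
        gcongr; linarith [add_one_le_exp |y|]
    _ = exp (x + 2 * |y|) := by rw [← exp_add]; ring_nf

theorem hasDerivAt_integral_max_mul_exp_sub {Ω : Type*} [MeasurableSpace Ω] {μ : Measure Ω}
    {X Y : Ω → ℝ} (hX : Measurable X) (hY : Measurable Y) {S K : ℝ} (hS : 0 < S) (hK : 0 < K)
    (hXK : ∀ᵐ ω ∂μ, X ω ≠ log (K / S))
    (hint : Integrable (fun ω => exp (X ω + 2 * |Y ω|)) μ) :
    HasDerivAt (fun ν => ∫ ω, max (S * exp (X ω + ν * Y ω) - K) 0 ∂μ)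
      (S * ∫ ω, Y ω * exp (X ω) * (if log (K / S) < X ω then 1 else 0) ∂μ) 0 := by
  have hmeas : ∀ ν, AEStronglyMeasurable (fun ω => max (S * exp (X ω + ν * Y ω) - K) 0) μ :=
    fun ν => by fun_prop
  have hint_zero : Integrable (fun ω => max (S * exp (X ω + 0 * Y ω) - K) 0) μ := by
    refine (hint.const_mul S).mono' (hmeas 0) (ae_of_all _ fun ω => ?_)
    rw [norm_of_nonneg (le_max_right _ _), zero_mul, add_zero]
    have hexp : S * exp (X ω) ≤ S * exp (X ω + 2 * |Y ω|) := by
      gcongr; linarith [abs_nonneg (Y ω)]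
    exact max_le (by linarith) (by positivity)
  have hbound : Integrable (fun ω => S * (exp (X ω + |Y ω|) * |Y ω|)) μ := by
    refine (hint.const_mul S).mono' (by fun_prop) (ae_of_all _ fun ω => ?_)
    rw [norm_of_nonneg (by positivity)]
    exact mul_le_mul_of_nonneg_left (exp_add_abs_mul_abs_le_exp_add_two_mul_abs _ _) hS.le
  rw [← integral_const_mul]
  exact (hasDerivAt_integral_of_dominated_loc_of_lip (Metric.ball_mem_nhds 0 one_pos)
    (.of_forall hmeas) hint_zero
    (((hY.mul hX.exp).mul (Measurable.ite (measurableSet_lt measurable_const hX)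
      measurable_const measurable_const)).const_mul S).aestronglyMeasurable
    (ae_of_all _ fun ω => lipschitzOnWith_max_mul_exp_sub hS.le (X ω) (Y ω)) hbound
    (hXK.mono fun ω hω => hasDerivAt_max_mul_exp_sub hS hK hω (Y ω))).2

lemma abs_sum_mul_div_sub_one_le {ι : Type*} (s : Finset ι) {ξ e σ A : ι → ℝ}
    (hξ : ∀ i ∈ s, |ξ i| ≤ A i) (hσ : ∀ i ∈ s, 0 < σ i) :
    |∑ i ∈ s, ξ i * (e i / σ i - 1)| ≤ ∑ i ∈ s, (A i / σ i * |e i| + A i) := by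
  refine (Finset.abs_sum_le_sum_abs _ _).trans (Finset.sum_le_sum fun i hi => ?_)
  have he : |e i / σ i - 1| ≤ |e i| / σ i + 1 := by
    simpa [abs_div, abs_of_pos (hσ i hi)] using abs_sub (e i / σ i) 1
  calc |ξ i * (e i / σ i - 1)| = |ξ i| * |e i / σ i - 1| := abs_mul _ _
    _ ≤ A i * (|e i| / σ i + 1) :=
      mul_le_mul (hξ i hi) he (abs_nonneg _) ((abs_nonneg _).trans (hξ i hi))
    _ = A i / σ i * |e i| + A i := by ring

namespace ProbabilityTheory

variable {Ω : Type*} [MeasurableSpace Ω] {μ : Measure Ω}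

lemma nullSingletonClass_map_const_mul {X : Ω → ℝ} (hX : Measurable X)
    [NullSingletonClass (μ.map X)] {c : ℝ} (hc : c ≠ 0) :
    NullSingletonClass (μ.map fun ω => c * X ω) := by
  rw [show (fun ω => c * X ω) = (c * ·) ∘ X from rfl,
    ← Measure.map_map (measurable_const_mul c) hX]
  constructor
  intro x
  rw [Measure.map_apply (measurable_const_mul c) (measurableSet_singleton x)]
  exact (Set.subsingleton_singleton.preimage (mul_right_injective₀ hc)).measure_zero _

lemma IndepFun.ae_add_ne [IsFiniteMeasure μ] {X R : Ω → ℝ} (hX : Measurable X)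
    (hR : Measurable R) (hXR : IndepFun X R μ) [NullSingletonClass (μ.map X)] (a : ℝ) :
    ∀ᵐ ω ∂μ, X ω + R ω ≠ a := by
  have hs : MeasurableSet {p : ℝ × ℝ | p.2 + p.1 = a} :=
    (measurable_snd.add measurable_fst) (measurableSet_singleton a)
  have hslice : ∀ r : ℝ, Prod.mk r ⁻¹' {p : ℝ × ℝ | p.2 + p.1 = a} = {a - r} := by
    intro r
    ext x
    simp only [Set.mem_preimage, Set.mem_ofPred_eq, Set.mem_singleton_iff]
    constructor <;> intro h <;> linarith
  rw [ae_iff]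
  simp only [ne_eq, not_not]
  change μ ((fun ω => (R ω, X ω)) ⁻¹' {p : ℝ × ℝ | p.2 + p.1 = a}) = 0
  rw [← Measure.map_apply (hR.prodMk hX) hs,
    (indepFun_iff_map_prod_eq_prod_map_map hR.aemeasurable hX.aemeasurable).mp hXR.symm,
    Measure.prod_apply hs]
  simp [hslice]

lemma iIndepFun.ae_sum_ne [IsFiniteMeasure μ] {ι : Type*} [Fintype ι] {X : ι → Ω → ℝ}
    (hX : ∀ i, Measurable (X i)) (hind : iIndepFun X μ) (i₀ : ι)
    [NullSingletonClass (μ.map (X i₀))] (a : ℝ) :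
    ∀ᵐ ω ∂μ, ∑ i, X i ω ≠ a := by
  classical
  have hrest : IndepFun (X i₀) (∑ i ∈ Finset.univ.erase i₀, X i) μ :=
    (hind.indepFun_finsetSum_of_notMem hX (Finset.notMem_erase i₀ _)).symm
  have hmeas_rest : Measurable (∑ i ∈ Finset.univ.erase i₀, X i) := by fun_prop
  filter_upwards [hrest.ae_add_ne (hX i₀) hmeas_rest a] with ω hω
  rwa [← Finset.add_sum_erase _ _ (Finset.mem_univ i₀), ← Finset.sum_apply]

lemma integrable_exp_mul_add_mul_abs_gaussianReal (m : ℝ) (w : NNReal) (a b : ℝ) :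
    Integrable (fun x => exp (a * x + b * |x|)) (gaussianReal m w) := by
  refine ((integrable_exp_mul_gaussianReal (a + b)).add
    (integrable_exp_mul_gaussianReal (a - b))).mono' (by fun_prop) (ae_of_all _ fun x => ?_)
  rw [Pi.add_apply, norm_of_nonneg (exp_pos _).le]
  rcases abs_choice x with h | h <;> rw [h]
  · calc exp (a * x + b * x) = exp ((a + b) * x) := by ring_nf
      _ ≤ _ := le_add_of_nonneg_right (exp_pos _).le
  · calc exp (a * x + b * -x) = exp ((a - b) * x) := by ring_nf
      _ ≤ _ := le_add_of_nonneg_left (exp_pos _).le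

lemma iIndepFun.integrable_exp_sum_mul_add_mul_abs [IsFiniteMeasure μ] {ι : Type*} [Fintype ι]
    {ε : ι → Ω → ℝ} (hmeas : ∀ i, Measurable (ε i)) (hindep : iIndepFun ε μ) {m : ι → ℝ}
    {w : ι → NNReal} (hgauss : ∀ i, μ.map (ε i) = gaussianReal (m i) (w i)) (a b : ι → ℝ) :
    Integrable (fun ω => exp (∑ i, (a i * ε i ω + b i * |ε i ω|))) μ := by
  have hind : iIndepFun (fun i ω => a i * ε i ω + b i * |ε i ω|) μ :=
    hindep.comp (fun i x => a i * x + b i * |x|) fun i => by fun_prop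
  have hint : ∀ i, Integrable (fun ω => exp (1 * (a i * ε i ω + b i * |ε i ω|))) μ := by
    intro i
    simp only [one_mul]
    have := integrable_exp_mul_add_mul_abs_gaussianReal (m i) (w i) (a i) (b i)
    rw [← hgauss i] at this
    exact (integrable_map_measure (by fun_prop) (hmeas i).aemeasurable).mp this
  simpa using hind.integrable_exp_mul_sum (t := 1) (fun i => by fun_prop) (s := Finset.univ)
    fun i _ => hint i

lemma iIndepFun.integrable_exp_sum_mul_add_abs_sum_mul_div_sub_one [IsFiniteMeasure μ]
    {ι : Type*} [Fintype ι] {ε : ι → Ω → ℝ} (hmeas : ∀ i, Measurable (ε i))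
    (hindep : iIndepFun ε μ) {m : ι → ℝ} {w : ι → NNReal}
    (hgauss : ∀ i, μ.map (ε i) = gaussianReal (m i) (w i)) {σ : ι → ℝ} (hσ : ∀ i, 0 < σ i)
    {ξ : ι → Ω → ℝ} (hξm : ∀ i, Measurable (ξ i)) {A : ι → ℝ} (hξA : ∀ i ω, |ξ i ω| ≤ A i) :
    Integrable (fun ω => exp (∑ i, σ i * ε i ω + |∑ i, ξ i ω * (ε i ω / σ i - 1)|)) μ := by
  refine ((hindep.integrable_exp_sum_mul_add_mul_abs hmeas hgauss σ fun i => A i / σ i).const_mul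
      (exp (∑ i, A i))).mono' (by fun_prop) (ae_of_all _ fun ω => ?_)
  rw [norm_of_nonneg (exp_pos _).le, ← exp_add, exp_le_exp]
  have := abs_sum_mul_div_sub_one_le Finset.univ (e := fun i => ε i ω)
    (fun i _ => hξA i ω) fun i _ => hσ i
  simp only [Finset.sum_add_distrib] at this ⊢
  linarith

end ProbabilityTheory

theorem stmt11_general {Ω : Type*} [MeasureSpace Ω] [IsProbabilityMeasure (ℙ : Measure Ω)]
    (T : ℕ) (hT : 2 ≤ T) (ε : Fin T → Ω → ℝ) (v : Fin T → ℝ)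
    (hmeas : ∀ k, Measurable (ε k))
    (hindep : iIndepFun ε ℙ)
    (hgauss : ∀ k, Measure.map (ε k) ℙ = gaussianReal 0 1)
    (hv : ∀ k, 0 < v k)
    (V : ℝ)
    (N : Ω → ℝ) (hN : N = fun ω => (∑ k, Real.sqrt (v k) * ε k ω) - V / 2)
    (f : ℝ → ℝ) (hfm : Measurable f) (C : ℝ) (hfb : ∀ x, |f x| ≤ C)
    (lam : Fin T → Fin T → ℝ)
    (ξ : Fin T → Ω → ℝ)
    (hξ : ξ = fun i ω => ∑ j ∈ Finset.Iio i, lam j i * f (ε j ω))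
    (Ntil : Ω → ℝ)
    (hNtil : Ntil = fun ω => (1 / 2) * ∑ i, ξ i ω * (ε i ω / Real.sqrt (v i) - 1))
    (S K : ℝ) (hS : 0 < S) (hK : 0 < K)
    (F : ℝ → ℝ)
    (hF : F = fun ν => ∫ ω, max (S * Real.exp (N ω + ν * Ntil ω) - K) 0) :
    HasDerivAt F
      (S * ∫ ω, Ntil ω * Real.exp (N ω)
          * (if Real.log (K / S) < N ω then (1 : ℝ) else 0)) 0 := by
  have hσ : ∀ k, 0 < √(v k) := fun k => sqrt_pos.2 (hv k)
  have hξm : ∀ i, Measurable (ξ i) := by rw [hξ]; fun_prop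
  have hξA : ∀ i ω, |ξ i ω| ≤ ∑ j ∈ Finset.Iio i, |lam j i| * C := fun i ω => by
    rw [hξ]
    refine (Finset.abs_sum_le_sum_abs _ _).trans (Finset.sum_le_sum fun j _ => ?_)
    rw [abs_mul]
    exact mul_le_mul_of_nonneg_left (hfb _) (abs_nonneg _)
  have hnull : ∀ᵐ ω, N ω ≠ log (K / S) := by
    let i₀ : Fin T := ⟨0, by omega⟩
    have : NullSingletonClass (Measure.map (ε i₀) ℙ) :=
      hgauss i₀ ▸ nullSingletonClass_gaussianReal one_ne_zero
    have := nullSingletonClass_map_const_mul (μ := ℙ) (hmeas i₀) (hσ i₀).ne'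
    filter_upwards [(hindep.comp (fun k x => √(v k) * x) fun k => by fun_prop).ae_sum_ne
      (fun k => (hmeas k).const_mul _) i₀ (log (K / S) + V / 2)] with ω hω
    rw [hN]
    intro h
    exact hω (by linarith)
  have hint : Integrable (fun ω => exp (N ω + 2 * |Ntil ω|)) := by
    refine ((hindep.integrable_exp_sum_mul_add_abs_sum_mul_div_sub_one hmeas hgauss hσ hξm
      hξA).const_mul (exp (-(V / 2)))).congr (ae_of_all _ fun ω => ?_)
    simp only [hN, hNtil]
    rw [← exp_add, abs_mul, abs_of_pos (by norm_num : (0 : ℝ) < 1 / 2)]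
    ring_nf
  rw [hF]
  exact hasDerivAt_integral_max_mul_exp_sub (by rw [hN]; fun_prop) (by rw [hNtil]; fun_prop)
    hS hK hnull hint

/-- Differentiability of the option price in the vol-of-vol at `ν = 0`:
`F(ν) = E[(S·e^{N + ν·Ñ} − K)₊]` satisfies `F'(0) = S·E[Ñ·e^N·1_{N > ln(K/S)}]`. -/
theorem stmt11 {Ω : Type*} [MeasureSpace Ω] [IsProbabilityMeasure (ℙ : Measure Ω)]
    (T : ℕ) (hT : 2 ≤ T) (ε : Fin T → Ω → ℝ) (v : Fin T → ℝ)
    (hmeas : ∀ k, Measurable (ε k))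
    (hindep : iIndepFun ε ℙ)
    (hgauss : ∀ k, Measure.map (ε k) ℙ = gaussianReal 0 1)
    (hv : ∀ k, 0 < v k)
    (V : ℝ) (hV : V = ∑ k, v k)
    (N : Ω → ℝ) (hN : N = fun ω => (∑ k, Real.sqrt (v k) * ε k ω) - V / 2)
    (f : ℝ → ℝ) (hfm : Measurable f) (C : ℝ) (hfb : ∀ x, |f x| ≤ C)
    (lam : Fin T → Fin T → ℝ)
    (ξ : Fin T → Ω → ℝ)
    (hξ : ξ = fun i ω => ∑ j ∈ Finset.Iio i, lam j i * f (ε j ω))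
    (Ntil : Ω → ℝ)
    (hNtil : Ntil = fun ω => (1 / 2) * ∑ i, ξ i ω * (ε i ω / Real.sqrt (v i) - 1))
    (S K : ℝ) (hS : 0 < S) (hK : 0 < K)
    (F : ℝ → ℝ)
    (hF : F = fun ν => ∫ ω, max (S * Real.exp (N ω + ν * Ntil ω) - K) 0) :
    HasDerivAt F
      (S * ∫ ω, Ntil ω * Real.exp (N ω)
          * (if Real.log (K / S) < N ω then (1 : ℝ) else 0)) 0 :=
  stmt11_general T hT ε v hmeas hindep hgauss hv V N hN f hfm C hfb lam ξ hξ Ntil hNtil S K hS hK F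
    hF
end

section
/- Let ε₁, …, ε_T (T ≥ 1) be independent standard Gaussian random variables on a probability space with filtration F_i = σ(ε₁, …, ε_i), F₀ trivial. Let σ₁, …, σ_T be bounded random variables such that σ_i is F_{i−1}-measurable for each i, and set r_i = σ_i·ε_i. Then E[(Σ_{i=1}^T r_i)³] = 3·Σ_{i=2}^T Σ_{j=1}^{i−1} E[r_j·σ_i²]. -/
/-!
Write `S n = ∑ i < n, σ i * ε i`. Then
`S (n+1)³ = S n³ + 3 S n² σ n ε n + 3 S n σ n² ε n² + σ n³ ε n³`, and `S n`, `σ n` are measurable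
with respect to the σ-algebra generated by the `ε j` with `j < n`, which is independent of `ε n`. Hence every term factors, and
`E ε = E ε³ = 0`, `E ε² = 1` leave `E[S (n+1)³] = E[S n³] + 3 E[S n σ n²]`. Summing over `n`
gives the formula.
-/

open Real MeasureTheory ProbabilityTheory Finset

lemma integral_pow_gaussianReal_zero_of_odd (v : NNReal) {k : ℕ} (hk : Odd k) :
    ∫ x, x ^ k ∂gaussianReal 0 v = 0 := by
  have hsymm := integral_map (μ := gaussianReal 0 v) measurable_neg.aemeasurable
    (continuous_pow k).aestronglyMeasurable
  rw [gaussianReal_map_neg, neg_zero] at hsymm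
  simp only [hk.neg_pow, integral_neg] at hsymm
  linarith

lemma integral_sq_gaussianReal_zero (v : NNReal) : ∫ x, x ^ 2 ∂gaussianReal 0 v = v := by
  rw [← variance_of_integral_eq_zero aemeasurable_id' integral_id_gaussianReal,
    variance_fun_id_gaussianReal]

lemma abs_pow_le_pow_of_abs_le {a C : ℝ} (h : |a| ≤ C) (k : ℕ) : |a ^ k| ≤ C ^ k := by
  rw [abs_pow]
  exact pow_le_pow_left₀ (abs_nonneg a) h k

namespace MeasureTheory.MemLp

variable {α : Type*} {m : MeasurableSpace α} {μ : Measure α} {p : ENNReal}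

lemma integrable_pow_of_le [IsFiniteMeasure μ] {f : α → ℝ} (hf : MemLp f p μ) {k : ℕ}
    (hk : (k : ENNReal) ≤ p) : Integrable (fun x => f x ^ k) μ :=
  (hf.mono_exponent hk).integrable_norm_pow'.mono' (hf.1.pow k)
    (ae_of_all _ fun x => by simp [norm_pow])

lemma bdd_mul {f g : α → ℝ} {C : ℝ} (hg : MemLp g p μ) (hf : AEStronglyMeasurable f μ)
    (hfC : ∀ x, |f x| ≤ C) : MemLp (fun x => f x * g x) p μ :=
  hg.mul' (memLp_top_of_bound hf C (ae_of_all _ hfC))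

end MeasureTheory.MemLp

section OneStep

variable {Ω : Type*} {G mΩ : MeasurableSpace Ω} {μ : Measure Ω} {e : Ω → ℝ}

lemma indepFun_comp_of_indep_comap (hind : Indep G (MeasurableSpace.comap e inferInstance) μ)
    {Y : Ω → ℝ} (hY : Measurable[G] Y) {φ : ℝ → ℝ} (hφ : Measurable φ) :
    IndepFun Y (fun ω => φ (e ω)) μ := by
  rw [IndepFun_iff_Indep]
  refine indep_of_indep_of_le_right (indep_of_indep_of_le_left hind hY.comap_le) ?_
  rw [← Function.comp_def, ← MeasurableSpace.comap_comp]
  exact MeasurableSpace.comap_mono hφ.comap_le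

variable [IsFiniteMeasure μ]

theorem integral_add_mul_pow_three (hG : G ≤ mΩ) {X s : Ω → ℝ} {C : ℝ}
    (hX : Measurable[G] X) (hXLp : MemLp X 3 μ) (hs : Measurable[G] s) (hsC : ∀ ω, |s ω| ≤ C)
    (heLp : MemLp e 3 μ) (hind : Indep G (MeasurableSpace.comap e inferInstance) μ)
    (he1 : ∫ ω, e ω ∂μ = 0) (he2 : ∫ ω, e ω ^ 2 ∂μ = 1)
    (he3 : ∫ ω, e ω ^ 3 ∂μ = 0) :
    ∫ ω, (X ω + s ω * e ω) ^ 3 ∂μ = ∫ ω, X ω ^ 3 ∂μ + 3 * ∫ ω, X ω * s ω ^ 2 ∂μ := by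
  have hsm : AEStronglyMeasurable s μ := (hs.mono hG le_rfl).aestronglyMeasurable
  have integral_mul_pow (Y : Ω → ℝ) (hY : Measurable[G] Y) (k : ℕ) :
      ∫ ω, Y ω * e ω ^ k ∂μ = (∫ ω, Y ω ∂μ) * ∫ ω, e ω ^ k ∂μ :=
    IndepFun.integral_fun_mul_eq_mul_integral
      (indepFun_comp_of_indep_comap hind hY (measurable_id.pow_const k))
      (hY.mono hG le_rfl).aestronglyMeasurable (heLp.1.pow k)
  have integrable_mul_pow (Y : Ω → ℝ) (hY : Measurable[G] Y) (hYi : Integrable Y μ) {k : ℕ}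
      (hk : (k : ENNReal) ≤ 3) : Integrable (fun ω => Y ω * e ω ^ k) μ :=
    (indepFun_comp_of_indep_comap hind hY (measurable_id.pow_const k)).integrable_mul hYi
      (heLp.integrable_pow_of_le hk)
  have hi0 : Integrable (fun ω => X ω ^ 3) μ := hXLp.integrable_pow_of_le (by norm_num)
  have hi1 : Integrable (fun ω => X ω ^ 2 * s ω * e ω ^ 1) μ :=
    integrable_mul_pow _ ((hX.pow_const 2).mul hs)
      ((hXLp.integrable_pow_of_le (by norm_num)).mul_bdd hsm (ae_of_all _ hsC)) (by norm_num)
  have hi2 : Integrable (fun ω => X ω * s ω ^ 2 * e ω ^ 2) μ :=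
    integrable_mul_pow _ (hX.mul (hs.pow_const 2))
      ((hXLp.integrable (by norm_num)).mul_bdd (hsm.pow 2)
        (ae_of_all _ fun ω => abs_pow_le_pow_of_abs_le (hsC ω) 2)) (by norm_num)
  have hi3 : Integrable (fun ω => s ω ^ 3 * e ω ^ 3) μ :=
    integrable_mul_pow _ (hs.pow_const 3)
      ((memLp_top_of_bound (hsm.pow 3) _
        (ae_of_all _ fun ω => abs_pow_le_pow_of_abs_le (hsC ω) 3)).integrable le_top)
      (by norm_num)
  have hexpand (ω : Ω) : (X ω + s ω * e ω) ^ 3 = X ω ^ 3 + 3 * (X ω ^ 2 * s ω * e ω ^ 1)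
      + 3 * (X ω * s ω ^ 2 * e ω ^ 2) + s ω ^ 3 * e ω ^ 3 := by ring
  simp_rw [hexpand]
  rw [integral_add ((hi0.fun_add (hi1.const_mul 3)).fun_add (hi2.const_mul 3)) hi3,
    integral_add (hi0.fun_add (hi1.const_mul 3)) (hi2.const_mul 3),
    integral_add hi0 (hi1.const_mul 3), integral_const_mul, integral_const_mul,
    integral_mul_pow (fun ω => X ω ^ 2 * s ω) ((hX.pow_const 2).mul hs),
    integral_mul_pow (fun ω => X ω * s ω ^ 2) (hX.mul (hs.pow_const 2)),
    integral_mul_pow (fun ω => s ω ^ 3) (hs.pow_const 3), he2, he3]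
  simp only [pow_one, he1]
  ring

end OneStep

namespace MeasureTheory.Filtration

variable {Ω β : Type*} {mΩ : MeasurableSpace Ω} [MeasurableSpace β]

def strictNatural (u : ℕ → Ω → β) (hu : ∀ n, Measurable (u n)) : Filtration ℕ mΩ where
  seq n := ⨆ j ∈ range n, MeasurableSpace.comap (u j) inferInstance
  mono' _ _ hmn := biSup_mono fun _ hj => mem_range.2 ((mem_range.1 hj).trans_le hmn)
  le' _ := iSup₂_le fun j _ => (hu j).comap_le

lemma measurable_strictNatural_succ {u : ℕ → Ω → β} (hu : ∀ n, Measurable (u n)) (n : ℕ) :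
    Measurable[strictNatural u hu (n + 1)] (u n) :=
  measurable_iff_comap_le.2 <| le_iSup₂ (f := fun j (_ : j ∈ range (n + 1)) =>
    MeasurableSpace.comap (u j) inferInstance) n (self_mem_range_succ n)

end MeasureTheory.Filtration

lemma ProbabilityTheory.iIndepFun.indep_strictNatural {Ω β : Type*} {mΩ : MeasurableSpace Ω}
    [MeasurableSpace β] {μ : Measure Ω} {u : ℕ → Ω → β} (hu : ∀ n, Measurable (u n))
    (hind : iIndepFun u μ) (n : ℕ) :
    Indep (Filtration.strictNatural u hu n) (MeasurableSpace.comap (u n) inferInstance) μ := by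
  have h := indep_iSup_of_disjoint (fun j => (hu j).comap_le) hind.iIndep
    (S := (range n : Set ℕ)) (T := {n}) (by simp)
  simpa [Filtration.strictNatural] using h

theorem integral_sum_mul_pow_three {Ω : Type*} {mΩ : MeasurableSpace Ω} {μ : Measure Ω}
    [IsFiniteMeasure μ] {F : Filtration ℕ mΩ} {ε σ : ℕ → Ω → ℝ} {C : ℝ}
    (hε : ∀ n, Measurable[F (n + 1)] (ε n)) (hσ : ∀ n, Measurable[F n] (σ n))
    (hσC : ∀ n ω, |σ n ω| ≤ C)
    (hind : ∀ n, Indep (F n) (MeasurableSpace.comap (ε n) inferInstance) μ)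
    (hεLp : ∀ n, MemLp (ε n) 3 μ) (hε1 : ∀ n, ∫ ω, ε n ω ∂μ = 0)
    (hε2 : ∀ n, ∫ ω, ε n ω ^ 2 ∂μ = 1) (hε3 : ∀ n, ∫ ω, ε n ω ^ 3 ∂μ = 0) (T : ℕ) :
    ∫ ω, (∑ i ∈ range T, σ i ω * ε i ω) ^ 3 ∂μ =
      3 * ∑ i ∈ range T, ∑ j ∈ range i, ∫ ω, σ j ω * ε j ω * σ i ω ^ 2 ∂μ := by
  have hσm (n : ℕ) : Measurable (σ n) := (hσ n).mono (F.le n) le_rfl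
  have hrLp (n : ℕ) : MemLp (fun ω => σ n ω * ε n ω) 3 μ :=
    (hεLp n).bdd_mul (hσm n).aestronglyMeasurable (hσC n)
  have hSF (n : ℕ) : Measurable[F n] (fun ω => ∑ i ∈ range n, σ i ω * ε i ω) :=
    Finset.measurable_sum _ fun j hj =>
      ((hσ j).mono (F.mono (mem_range.1 hj).le) le_rfl).mul
        ((hε j).mono (F.mono (mem_range.1 hj)) le_rfl)
  induction T with
  | zero => simp
  | succ n ih =>
    simp only [sum_range_succ]
    rw [integral_add_mul_pow_three (F.le n) (hSF n) (memLp_finsetSum _ fun j _ => hrLp j) (hσ n)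
      (hσC n) (hεLp n) (hind n) (hε1 n) (hε2 n) (hε3 n), ih]
    simp only [sum_mul]
    rw [integral_finsetSum _ fun j _ => ((hrLp j).integrable (by norm_num)).mul_bdd
      ((hσm n).pow_const 2).aestronglyMeasurable
      (ae_of_all _ fun ω => abs_pow_le_pow_of_abs_le (hσC n ω) 2)]
    ring

theorem stmt12_general {Ω : Type*} [MeasureSpace Ω] [IsProbabilityMeasure (ℙ : Measure Ω)]
    (T : ℕ) (ε σ : ℕ → Ω → ℝ)
    (hmeas : ∀ i, Measurable (ε i))
    (hindep : iIndepFun ε ℙ)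
    (hgauss : ∀ i, Measure.map (ε i) ℙ = gaussianReal 0 1)
    (C : ℝ) (hbd : ∀ i ω, |σ i ω| ≤ C)
    (F : ℕ → MeasurableSpace Ω)
    (hF : F = fun k => ⨆ j ∈ Finset.range k, MeasurableSpace.comap (ε j) (borel ℝ))
    (hpred : ∀ i, Measurable[F i] (σ i))
    (r : ℕ → Ω → ℝ) (hr : r = fun i ω => σ i ω * ε i ω) :
    ∫ ω, (∑ i ∈ Finset.range T, r i ω) ^ 3 =
      3 * ∑ i ∈ Finset.range T, ∑ j ∈ Finset.range i, ∫ ω, r j ω * (σ i ω) ^ 2 := by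
  have hlaw (i : ℕ) : HasLaw (ε i) (gaussianReal 0 1) ℙ := ⟨(hmeas i).aemeasurable, hgauss i⟩
  have hmoment (i k : ℕ) : ∫ ω, ε i ω ^ k = ∫ x, x ^ k ∂gaussianReal 0 1 :=
    (hlaw i).integral_comp (f := (· ^ k)) (by fun_prop)
  subst hF hr
  exact integral_sum_mul_pow_three (F := Filtration.strictNatural ε hmeas)
    (Filtration.measurable_strictNatural_succ hmeas) hpred hbd (hindep.indep_strictNatural hmeas)
    (fun i => (memLp_map_measure_iff aestronglyMeasurable_id (hmeas i).aemeasurable).1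
      ((hgauss i).symm ▸ memLp_id_gaussianReal 3))
    (fun i => (hlaw i).integral_eq.trans integral_id_gaussianReal)
    (fun i => (hmoment i 2).trans (by simp [integral_sq_gaussianReal_zero]))
    (fun i => (hmoment i 3).trans (integral_pow_gaussianReal_zero_of_odd 1 (by decide))) T

/-- Third moment of an aggregate return with predictable volatility:
if `r_i = σ_i·ε_i` with `ε_i` i.i.d. standard Gaussians, `σ_i` bounded and measurable with
respect to the σ-algebra generated by the previous `ε_j`'s, then
`E[(Σ r_i)³] = 3·Σ_i Σ_{j<i} E[r_j·σ_i²]`. -/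
theorem stmt12 {Ω : Type*} [MeasureSpace Ω] [IsProbabilityMeasure (ℙ : Measure Ω)]
    (T : ℕ) (hT : 1 ≤ T) (ε σ : ℕ → Ω → ℝ)
    (hmeas : ∀ i, Measurable (ε i))
    (hindep : iIndepFun ε ℙ)
    (hgauss : ∀ i, Measure.map (ε i) ℙ = gaussianReal 0 1)
    (C : ℝ) (hbd : ∀ i ω, |σ i ω| ≤ C)
    (F : ℕ → MeasurableSpace Ω)
    (hF : F = fun k => ⨆ j ∈ Finset.range k, MeasurableSpace.comap (ε j) (borel ℝ))
    (hpred : ∀ i, Measurable[F i] (σ i))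
    (r : ℕ → Ω → ℝ) (hr : r = fun i ω => σ i ω * ε i ω) :
    ∫ ω, (∑ i ∈ Finset.range T, r i ω) ^ 3 =
      3 * ∑ i ∈ Finset.range T, ∑ j ∈ Finset.range i, ∫ ω, r j ω * (σ i ω) ^ 2 :=
  stmt12_general T ε σ hmeas hindep hgauss C hbd F hF hpred r hr
end

section
/- Let g : [0,∞) → ℝ be continuous with g(0) ≠ 0. Then lim_{T→0⁺} (∫₀^T g(ℓ) dℓ) / (∫₀^T (1 − ℓ/T)·g(ℓ) dℓ) = 2. In particular, the Skew-Stickiness Ratio R_T tends to 2 in the small-maturity limit, independently of the leverage correlation function (provided it is continuous and nonzero at 0). -/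
/-!
Both integrals are kernel averages `∫₀^T w(ℓ/T) g(ℓ) dℓ` of `g` over `[0, T]`, with `w = 1` and
`w(s) = 1 - s`. Rescaling `ℓ = T s` shows that such an average equals `T · g(0) · ∫₀¹ w` up to an
error `T · sup |w| · sup_{[0,T]} |g - g(0)| = o(T)`, so the ratio tends to
`(∫₀¹ 1) / (∫₀¹ (1 - s) ds) = 2`.
-/

open Filter Topology Set intervalIntegral

variable {w g : ℝ → ℝ}

lemma integral_comp_div_self (w : ℝ → ℝ) {T : ℝ} (hT : T ≠ 0) :
    ∫ ℓ in 0..T, w (ℓ / T) = T * ∫ s in 0..1, w s := by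
  rw [integral_comp_div w hT, zero_div, div_self hT, smul_eq_mul]

lemma continuousOn_comp_div_self (hw : ContinuousOn w (Icc 0 1)) {T : ℝ} (hT : 0 < T) :
    ContinuousOn (fun ℓ => w (ℓ / T)) (uIcc 0 T) := by
  rw [uIcc_of_le hT.le]
  refine hw.comp (by fun_prop) fun ℓ hℓ => ⟨div_nonneg hℓ.1 hT.le, (div_le_one hT).2 hℓ.2⟩

lemma abs_integral_comp_div_mul_sub_le {M ε T : ℝ} (hT : 0 < T)
    (hM : ∀ s ∈ Icc (0 : ℝ) 1, ‖w s‖ ≤ M) (hε : ∀ ℓ ∈ Ioc 0 T, |g ℓ - g 0| ≤ ε) :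
    |∫ ℓ in 0..T, w (ℓ / T) * (g ℓ - g 0)| ≤ M * ε * T := by
  have hbound := norm_integral_le_of_norm_le_const (a := 0) (b := T)
    (f := fun ℓ => w (ℓ / T) * (g ℓ - g 0)) (C := M * ε) fun ℓ hℓ => by
      rw [uIoc_of_le hT.le] at hℓ
      rw [norm_mul]
      exact mul_le_mul (hM _ ⟨div_nonneg hℓ.1.le hT.le, (div_le_one hT).2 hℓ.2⟩) (hε ℓ hℓ)
        (norm_nonneg _) ((norm_nonneg _).trans (hM 0 (left_mem_Icc.2 zero_le_one)))
  rwa [sub_zero, abs_of_pos hT] at hbound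

theorem tendsto_integral_comp_div_mul_div_nhdsGT_zero (hw : ContinuousOn w (Icc 0 1))
    (hg : ContinuousOn g (Ici 0)) :
    Tendsto (fun T => (∫ ℓ in 0..T, w (ℓ / T) * g ℓ) / T) (𝓝[>] 0)
      (𝓝 ((∫ s in 0..1, w s) * g 0)) := by
  obtain ⟨M, hM⟩ := isCompact_Icc.exists_bound_of_continuousOn hw
  have hM0 : 0 ≤ M := (norm_nonneg _).trans (hM 0 (left_mem_Icc.2 zero_le_one))
  rw [Metric.tendsto_nhdsWithin_nhds]
  intro ε hε
  obtain ⟨δ, hδ, hgδ⟩ := Metric.continuousWithinAt_iff.1 (hg 0 self_mem_Ici)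
    (ε / (M + 1)) (by positivity)
  refine ⟨δ, hδ, fun T (hT : 0 < T) hTδ => ?_⟩
  rw [Real.dist_eq, sub_zero, abs_of_pos hT] at hTδ
  have hgT : ∀ ℓ ∈ Ioc 0 T, |g ℓ - g 0| ≤ ε / (M + 1) := fun ℓ hℓ => by
    refine (hgδ hℓ.1.le ?_).le
    rw [Real.dist_eq, sub_zero, abs_of_pos hℓ.1]
    exact hℓ.2.trans_lt hTδ
  have hwT := continuousOn_comp_div_self hw hT
  have hgT' : ContinuousOn g (uIcc 0 T) := hg.mono (by simp [uIcc_of_le hT.le, Icc_subset_Ici_self])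
  have hsplit : (∫ ℓ in 0..T, w (ℓ / T) * g ℓ) / T - (∫ s in 0..1, w s) * g 0
      = (∫ ℓ in 0..T, w (ℓ / T) * (g ℓ - g 0)) / T := by
    simp_rw [mul_sub]
    rw [integral_sub (hwT.intervalIntegrable.mul_continuousOn hgT')
      (hwT.intervalIntegrable.mul_const _), integral_mul_const,
      integral_comp_div_self w hT.ne']
    field_simp
  rw [Real.dist_eq, hsplit, abs_div, abs_of_pos hT, div_lt_iff₀ hT]
  calc |∫ ℓ in 0..T, w (ℓ / T) * (g ℓ - g 0)| ≤ M * (ε / (M + 1)) * T :=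
        abs_integral_comp_div_mul_sub_le hT hM hgT
    _ < ε * T := by
        gcongr
        rw [mul_div_assoc', div_lt_iff₀ (by positivity)]
        nlinarith

/-- Universal small-maturity limit of the Skew-Stickiness Ratio: for `g` continuous on `[0,∞)`
with `g(0) ≠ 0`, `(∫₀^T g(ℓ) dℓ) / (∫₀^T (1 − ℓ/T)·g(ℓ) dℓ) → 2` as `T → 0⁺`. -/
theorem stmt19 (g : ℝ → ℝ) (hg : ContinuousOn g (Set.Ici (0 : ℝ))) (hg0 : g 0 ≠ 0) :
    Tendsto (fun T : ℝ =>
        (∫ ℓ in (0 : ℝ)..T, g ℓ) / (∫ ℓ in (0 : ℝ)..T, (1 - ℓ / T) * g ℓ))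
      (nhdsWithin 0 (Set.Ioi 0)) (nhds 2) := by
  have hnum : Tendsto (fun T => (∫ ℓ in 0..T, g ℓ) / T) (𝓝[>] 0) (𝓝 (g 0)) := by
    simpa using tendsto_integral_comp_div_mul_div_nhdsGT_zero (w := fun _ => 1)
      continuousOn_const hg
  have hden : Tendsto (fun T => (∫ ℓ in 0..T, (1 - ℓ / T) * g ℓ) / T) (𝓝[>] 0)
      (𝓝 (g 0 / 2)) := by
    have h := tendsto_integral_comp_div_mul_div_nhdsGT_zero (w := fun s => 1 - s)
      (by fun_prop) hg
    convert h using 2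
    rw [integral_sub intervalIntegrable_const intervalIntegrable_id, integral_id, integral_const]
    ring
  have hratio := hnum.div hden (div_ne_zero hg0 two_ne_zero)
  rw [div_div_cancel₀ hg0] at hratio
  refine hratio.congr' ?_
  filter_upwards [self_mem_nhdsWithin] with T (hT : 0 < T)
  exact div_div_div_cancel_right₀ hT.ne' _ _
end
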